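/- arXiv:2503.15894 — 3 statements merged into one kernel-verified Lean document; each statement's English description precedes it below -/
import Mathlib

section
/- Let σ be a nonnegative random variable with E[σ^2] < ∞, independent of an i.i.d.-generated sum; let (Z_t) be i.i.d. with E[Z]=0, regularly varying with index 2, infinite variance, and normalization a_n^Z with n K_Z(a_n^Z)/(a_n^Z)^2 → 1 where K_Z(x) = E[Z^2 1(|Z|≤x)]. If a_n solves n E[(σZ)^2 1(|σZ| ≤ a_n)]/a_n^2 → 1, then a_n/a_n^Z → (E[σ^2])^{1/2} as n → ∞. -/
open MeasureTheory ProbabilityTheory Filter Topology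
open scoped ProbabilityTheory

set_option linter.unusedSectionVars false
set_option linter.unusedVariables false
set_option linter.deprecated false
set_option maxHeartbeats 2000000

def SlowlyVarying (L : ℝ → ℝ) : Prop :=
  ∀ c > 0, Tendsto (fun x => L (c * x) / L x) atTop (𝓝 1)



lemma potter_bound {K : ℝ → ℝ} (hmono : Monotone K) (hpos : ∀ᶠ x in atTop, 0 < K x)
    (h2 : Tendsto (fun x => K (2*x)/K x) atTop (𝓝 1)) :
    ∃ X₁ : ℝ, 0 < X₁ ∧ (∀ x, X₁ ≤ x → 0 < K x) ∧
      ∀ y x, X₁ ≤ y → y ≤ x → K x ≤ 2 * (x/y) * K y := by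
  have hev : ∀ᶠ x in atTop, 0 < K x ∧ K (2*x)/K x < 2 :=
    hpos.and (h2.eventually_lt_const one_lt_two)
  obtain ⟨x₀, hx₀⟩ := eventually_atTop.1 hev
  refine ⟨max x₀ 1, lt_of_lt_of_le one_pos (le_max_right _ _), ?_, ?_⟩
  · intro x hx; exact (hx₀ x (le_trans (le_max_left _ _) hx)).1
  set X₁ := max x₀ 1 with hX₁
  have hX₁pos : (0:ℝ) < X₁ := lt_of_lt_of_le one_pos (le_max_right _ _)
  have hKpos : ∀ x, X₁ ≤ x → 0 < K x := fun x hx => (hx₀ x (le_trans (le_max_left _ _) hx)).1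
  have hdouble : ∀ x, X₁ ≤ x → K (2*x) ≤ 2 * K x := by
    intro x hx
    have h := (hx₀ x (le_trans (le_max_left _ _) hx)).2
    have hk := hKpos x hx
    calc K (2*x) = (K (2*x)/K x) * K x := by field_simp
    _ ≤ 2 * K x := mul_le_mul_of_nonneg_right h.le hk.le
  -- main induction
  have main : ∀ k : ℕ, ∀ y x, X₁ ≤ y → y ≤ x → x ≤ 2^k * y → K x ≤ 2 * (x/y) * K y := by
    intro k
    induction k with
    | zero =>
      intro y x hy hyx hxk
      have : x = y := le_antisymm (by simpa using hxk) hyx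
      subst this
      have := hKpos x hy
      rw [div_self (lt_of_lt_of_le hX₁pos hy).ne']
      nlinarith
    | succ k ih =>
      intro y x hy hyx hxk
      by_cases hc : x ≤ 2*y
      · have h1 : K x ≤ K (2*y) := hmono hc
        have h2' : K (2*y) ≤ 2 * K y := hdouble y hy
        have hky := hKpos y hy
        have hxy1 : 1 ≤ x/y := (one_le_div (lt_of_lt_of_le hX₁pos hy)).2 hyx
        nlinarith
      · push_neg at hc
        have hy2 : X₁ ≤ 2*y := le_trans hy (by nlinarith [lt_of_lt_of_le hX₁pos hy])
        have h1 : K x ≤ 2 * (x/(2*y)) * K (2*y) := by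
          refine ih (2*y) x hy2 hc.le ?_
          calc x ≤ 2^(k+1) * y := hxk
          _ = 2^k * (2*y) := by ring
        have h2' : K (2*y) ≤ 2 * K y := hdouble y hy
        have hypos : (0:ℝ) < y := lt_of_lt_of_le hX₁pos hy
        have hxpos : (0:ℝ) < x := lt_of_lt_of_le hypos hyx
        have key : 2 * (x/(2*y)) * (2 * K y) = 2 * (x/y) * K y := by
          field_simp
        calc K x ≤ 2 * (x/(2*y)) * K (2*y) := h1
        _ ≤ 2 * (x/(2*y)) * (2 * K y) := by
            have : (0:ℝ) < x/(2*y) := by positivity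
            nlinarith
        _ = 2 * (x/y) * K y := key
  intro y x hy hyx
  obtain ⟨k, hk⟩ := pow_unbounded_of_one_lt (x/y) one_lt_two
  have hypos : (0:ℝ) < y := lt_of_lt_of_le hX₁pos hy
  exact main k y x hy hyx (by rw [div_lt_iff₀ hypos] at hk; linarith)


section aux2
variable {Ω : Type*} [MeasureSpace Ω] [IsProbabilityMeasure (ℙ : Measure Ω)]
variable {Ω : Type*} [MeasureSpace Ω] [IsProbabilityMeasure (ℙ : Measure Ω)]

lemma trunc_set_meas (W : Ω → ℝ) (hW : Measurable W) (y : ℝ) :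
    MeasurableSet {ω | |W ω| ≤ y} :=
  measurableSet_le hW.abs measurable_const

lemma trunc_integrable (W : Ω → ℝ) (hW : Measurable W) (y : ℝ) :
    IntegrableOn (fun ω => (W ω)^2) {ω | |W ω| ≤ y} ℙ := by
  refine Integrable.mono' (integrable_const (y^2)) ((hW.pow_const 2).aestronglyMeasurable.restrict) ?_
  refine (ae_restrict_iff' (trunc_set_meas W hW y)).2 (ae_of_all _ fun ω hω => ?_)
  have : |W ω| ≤ y := hω
  have h0 : (0:ℝ) ≤ |W ω| := abs_nonneg _
  rw [Real.norm_eq_abs, abs_of_nonneg (sq_nonneg _), ← sq_abs]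
  nlinarith

lemma trunc_mono (W : Ω → ℝ) (hW : Measurable W) :
    Monotone (fun y => ∫ ω in {ω | |W ω| ≤ y}, (W ω)^2 ∂ℙ) := by
  intro y z hyz
  exact setIntegral_mono_set (trunc_integrable W hW z) (ae_of_all _ fun ω => sq_nonneg _)
    (HasSubset.Subset.eventuallyLE fun ω hω => le_trans hω hyz)

lemma trunc_nonneg (W : Ω → ℝ) (hW : Measurable W) (y : ℝ) :
    0 ≤ ∫ ω in {ω | |W ω| ≤ y}, (W ω)^2 ∂ℙ :=
  setIntegral_nonneg (trunc_set_meas W hW y) (fun ω _ => sq_nonneg _)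

-- difference bounds
lemma trunc_diff_eq (W : Ω → ℝ) (hW : Measurable W) {x y : ℝ} (hxy : x ≤ y) :
    (∫ ω in {ω | |W ω| ≤ y}, (W ω)^2 ∂ℙ) - (∫ ω in {ω | |W ω| ≤ x}, (W ω)^2 ∂ℙ)
      = ∫ ω in {ω | |W ω| ≤ y} \ {ω | |W ω| ≤ x}, (W ω)^2 ∂ℙ := by
  rw [integral_diff (trunc_set_meas W hW x) (trunc_integrable W hW y)
    (fun ω hω => le_trans hω hxy)]

lemma measure_diff_trunc (W : Ω → ℝ) (hW : Measurable W) {x y : ℝ} (hxy : x ≤ y) :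
    (ℙ ({ω | |W ω| ≤ y} \ {ω | |W ω| ≤ x})).toReal
      = (ℙ {ω | x < |W ω|}).toReal - (ℙ {ω | y < |W ω|}).toReal := by
  have hseteq : {ω | |W ω| ≤ y} \ {ω | |W ω| ≤ x} = {ω | x < |W ω|} \ {ω | y < |W ω|} := by
    ext ω; simp only [Set.mem_diff, Set.mem_setOf_eq, not_le, not_lt]; tauto
  have hsub : {ω | y < |W ω|} ⊆ {ω | x < |W ω|} := fun ω hω => lt_of_le_of_lt hxy hω
  have hmd := measure_diff hsub ((measurableSet_lt measurable_const hW.abs).nullMeasurableSet)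
    (measure_ne_top ℙ {ω | y < |W ω|})
  rw [hseteq, hmd, ENNReal.toReal_sub_of_le (measure_mono hsub) (measure_ne_top _ _)]

lemma trunc_diff_lower (W : Ω → ℝ) (hW : Measurable W) {x y : ℝ} (hx : 0 < x) (hxy : x ≤ y) :
    x^2 * ((ℙ {ω | x < |W ω|}).toReal - (ℙ {ω | y < |W ω|}).toReal)
      ≤ (∫ ω in {ω | |W ω| ≤ y}, (W ω)^2 ∂ℙ) - (∫ ω in {ω | |W ω| ≤ x}, (W ω)^2 ∂ℙ) := by
  rw [trunc_diff_eq W hW hxy, ← measure_diff_trunc W hW hxy]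
  have hD : MeasurableSet ({ω | |W ω| ≤ y} \ {ω | |W ω| ≤ x}) :=
    (trunc_set_meas W hW y).diff (trunc_set_meas W hW x)
  calc x^2 * (ℙ ({ω | |W ω| ≤ y} \ {ω | |W ω| ≤ x})).toReal
      = ∫ ω in {ω | |W ω| ≤ y} \ {ω | |W ω| ≤ x}, x^2 ∂ℙ := by
        rw [setIntegral_const, smul_eq_mul, measureReal_def]; ring
    _ ≤ ∫ ω in {ω | |W ω| ≤ y} \ {ω | |W ω| ≤ x}, (W ω)^2 ∂ℙ := by
        refine setIntegral_mono_on (integrable_const _)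
          ((trunc_integrable W hW y).mono_set Set.diff_subset) hD (fun ω hω => ?_)
        have h1 : x < |W ω| := by
          have := hω.2; simp only [Set.mem_setOf_eq, not_le] at this; exact this
        nlinarith [sq_abs (W ω), abs_nonneg (W ω)]

lemma trunc_diff_upper (W : Ω → ℝ) (hW : Measurable W) {x y : ℝ} (hy : 0 ≤ y) (hxy : x ≤ y) :
    (∫ ω in {ω | |W ω| ≤ y}, (W ω)^2 ∂ℙ) - (∫ ω in {ω | |W ω| ≤ x}, (W ω)^2 ∂ℙ)
      ≤ y^2 * (ℙ {ω | x < |W ω|}).toReal := by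
  rw [trunc_diff_eq W hW hxy]
  have hD : MeasurableSet ({ω | |W ω| ≤ y} \ {ω | |W ω| ≤ x}) :=
    (trunc_set_meas W hW y).diff (trunc_set_meas W hW x)
  calc (∫ ω in {ω | |W ω| ≤ y} \ {ω | |W ω| ≤ x}, (W ω)^2 ∂ℙ)
      ≤ ∫ ω in {ω | |W ω| ≤ y} \ {ω | |W ω| ≤ x}, y^2 ∂ℙ := by
        refine setIntegral_mono_on ((trunc_integrable W hW y).mono_set Set.diff_subset)
          (integrable_const _) hD (fun ω hω => ?_)
        have h1 : |W ω| ≤ y := hω.1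
        nlinarith [sq_abs (W ω), abs_nonneg (W ω)]
    _ = y^2 * (ℙ ({ω | |W ω| ≤ y} \ {ω | |W ω| ≤ x})).toReal := by
        rw [setIntegral_const, smul_eq_mul, measureReal_def]; ring
    _ ≤ y^2 * (ℙ {ω | x < |W ω|}).toReal := by
        have : ({ω | |W ω| ≤ y} \ {ω | |W ω| ≤ x}) ⊆ {ω | x < |W ω|} := by
          intro ω hω
          have := hω.2; simp only [Set.mem_setOf_eq, not_le] at this ⊢; exact this
        exact mul_le_mul_of_nonneg_left (ENNReal.toReal_mono (measure_ne_top _ _)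
          (measure_mono this)) (sq_nonneg _)

variable {Ω : Type*} [MeasureSpace Ω] [IsProbabilityMeasure (ℙ : Measure Ω)]

lemma trunc_eq_lintegral (W : Ω → ℝ) (hW : Measurable W) (y : ℝ) :
    ∫ ω in {ω | |W ω| ≤ y}, (W ω)^2 ∂ℙ
      = (∫⁻ ω in {ω | |W ω| ≤ y}, ENNReal.ofReal ((W ω)^2) ∂ℙ).toReal := by
  rw [integral_eq_lintegral_of_nonneg_ae (ae_of_all _ fun ω => sq_nonneg _)
    ((hW.pow_const 2).aestronglyMeasurable.restrict)]

lemma trunc_lintegral_lt_top (W : Ω → ℝ) (hW : Measurable W) (y : ℝ) :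
    (∫⁻ ω in {ω | |W ω| ≤ y}, ENNReal.ofReal ((W ω)^2) ∂ℙ) < ⊤ := by
  have hb : ∀ᵐ ω ∂((ℙ : Measure Ω).restrict {ω | |W ω| ≤ y}), ENNReal.ofReal ((W ω)^2) ≤ ENNReal.ofReal (y^2) := by
    refine (ae_restrict_iff' (measurableSet_le hW.abs measurable_const)).2
      (ae_of_all _ fun ω hω => ?_)
    have h1 : |W ω| ≤ y := hω
    exact ENNReal.ofReal_le_ofReal (by nlinarith [sq_abs (W ω), abs_nonneg (W ω)])
  calc (∫⁻ ω in {ω | |W ω| ≤ y}, ENNReal.ofReal ((W ω)^2) ∂ℙ)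
      ≤ ∫⁻ _ω in {ω | |W ω| ≤ y}, ENNReal.ofReal (y^2) ∂ℙ := lintegral_mono_ae hb
  _ ≤ ENNReal.ofReal (y^2) * 1 := by
      rw [setLIntegral_const]
      exact mul_le_mul_right (le_trans (measure_mono (Set.subset_univ _)) (by simp)) _
  _ < ⊤ := by simp [ENNReal.ofReal_lt_top]

lemma trunc_tendsto_atTop (W : Ω → ℝ) (hW : Measurable W)
    (hvar : ¬ Integrable (fun ω => (W ω)^2) ℙ) :
    Tendsto (fun y => ∫ ω in {ω | |W ω| ≤ y}, (W ω)^2 ∂ℙ) atTop atTop := by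
  have hlint : ∫⁻ ω, ENNReal.ofReal ((W ω)^2) ∂ℙ = ⊤ := by
    by_contra h
    exact hvar ⟨(hW.pow_const 2).aestronglyMeasurable,
      hasFiniteIntegral_iff_ofReal (ae_of_all _ fun ω => sq_nonneg _) |>.2 (lt_top_iff_ne_top.2 h)⟩
  -- sup over ℕ of truncated lintegrals is ⊤
  have hsup : (⨆ n : ℕ, ∫⁻ ω in {ω | |W ω| ≤ (n:ℝ)}, ENNReal.ofReal ((W ω)^2) ∂ℙ) = ⊤ := by
    have heq : ∀ n : ℕ, (∫⁻ ω in {ω | |W ω| ≤ (n:ℝ)}, ENNReal.ofReal ((W ω)^2) ∂ℙ)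
        = ∫⁻ ω, Set.indicator {ω | |W ω| ≤ (n:ℝ)} (fun ω => ENNReal.ofReal ((W ω)^2)) ω ∂ℙ := by
      intro n
      rw [lintegral_indicator (measurableSet_le hW.abs measurable_const)]
    simp_rw [heq]
    rw [← lintegral_iSup]
    · rw [← hlint]
      congr 1
      ext ω
      apply le_antisymm
      · exact iSup_le fun n => Set.indicator_le_self' (fun _ _ => zero_le) ω
      · have hmem : |W ω| ≤ ((⌈|W ω|⌉₊ : ℕ) : ℝ) := Nat.le_ceil _
        refine le_iSup_of_le ⌈|W ω|⌉₊ ?_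
        rw [Set.indicator_of_mem (show ω ∈ {ω' | |W ω'| ≤ ((⌈|W ω|⌉₊ : ℕ) : ℝ)} from hmem)]
    · exact fun n => (Measurable.ennreal_ofReal (hW.pow_const 2)).indicator
        (measurableSet_le hW.abs measurable_const)
    · intro i j hij
      intro ω
      refine Set.indicator_le_indicator_of_subset ?_ (fun _ => zero_le) ω
      intro ω' hω'
      have h1 : |W ω'| ≤ (i:ℝ) := hω'
      exact le_trans h1 (by exact_mod_cast hij)
  rw [tendsto_atTop]
  intro M
  have : ENNReal.ofReal M < ⨆ n : ℕ, ∫⁻ ω in {ω | |W ω| ≤ (n:ℝ)}, ENNReal.ofReal ((W ω)^2) ∂ℙ := by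
    rw [hsup]; exact ENNReal.ofReal_lt_top
  obtain ⟨n, hn⟩ := lt_iSup_iff.1 this
  rw [eventually_atTop]
  refine ⟨n, fun y hy => ?_⟩
  have h1 : M ≤ ∫ ω in {ω | |W ω| ≤ (n:ℝ)}, (W ω)^2 ∂ℙ := by
    rw [trunc_eq_lintegral W hW]
    calc M ≤ (ENNReal.ofReal M).toReal := by
          rcases le_or_gt M 0 with h | h
          · exact le_trans h ENNReal.toReal_nonneg
          · rw [ENNReal.toReal_ofReal h.le]
    _ ≤ _ := ENNReal.toReal_mono (trunc_lintegral_lt_top W hW _).ne hn.le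
  exact le_trans h1 (trunc_mono W hW hy)


lemma fubini_id (s Z : Ω → ℝ) (hs : Measurable s) (hZ : Measurable Z)
    (hnonneg : ∀ ω, 0 ≤ s ω) (hindep : IndepFun s Z ℙ) (x : ℝ) :
    (∫ ω in {ω | |s ω * Z ω| ≤ x}, (s ω * Z ω)^2 ∂ℙ)
      = ∫ u, u^2 * (∫ ω in {ω | |Z ω| ≤ x/u}, (Z ω)^2 ∂ℙ) ∂((ℙ : Measure Ω).map s) := by
  set μ := (ℙ : Measure Ω).map s with hμdef
  set ν := (ℙ : Measure Ω).map Z with hνdef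
  set kz : ℝ → ℝ := fun y => ∫ ω in {ω | |Z ω| ≤ y}, (Z ω)^2 ∂ℙ with hkzdef
  have hkzmeas : Measurable kz := (trunc_mono Z hZ).measurable
  have hpair : (ℙ : Measure Ω).map (fun ω => (s ω, Z ω)) = μ.prod ν :=
    (indepFun_iff_map_prod_eq_prod_map_map hs.aemeasurable hZ.aemeasurable).mp hindep
  set F : ℝ × ℝ → ENNReal :=
    fun p => Set.indicator {p : ℝ × ℝ | |p.1 * p.2| ≤ x}
      (fun p => ENNReal.ofReal ((p.1 * p.2)^2)) p with hFdef
  have hSmeas : MeasurableSet {p : ℝ × ℝ | |p.1 * p.2| ≤ x} :=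
    measurableSet_le (measurable_fst.mul measurable_snd).abs measurable_const
  have hFmeas : Measurable F :=
    (((measurable_fst.mul measurable_snd).pow_const 2).ennreal_ofReal).indicator hSmeas
  -- KZ in ℝ≥0∞, over ν
  set KZ : ℝ → ENNReal := fun y => ∫⁻ v in {v : ℝ | |v| ≤ y}, ENNReal.ofReal (v^2) ∂ν with hKZdef
  have hKZpush : ∀ y, KZ y = ∫⁻ ω in {ω | |Z ω| ≤ y}, ENNReal.ofReal ((Z ω)^2) ∂ℙ := by
    intro y
    rw [hKZdef, hνdef]
    exact setLIntegral_map (measurableSet_le measurable_id.abs measurable_const)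
      ((measurable_id.pow_const 2).ennreal_ofReal) hZ
  have hKZfin : ∀ y, KZ y ≠ ⊤ := fun y => by
    rw [hKZpush y]; exact (trunc_lintegral_lt_top Z hZ y).ne
  have hKZtoReal : ∀ y, ENNReal.ofReal (kz y) = KZ y := fun y => by
    rw [hkzdef]
    simp only
    rw [trunc_eq_lintegral Z hZ y, ← hKZpush y, ENNReal.ofReal_toReal (hKZfin y)]
  -- step 1-4 : kX x = (∫⁻ u, ofReal(u²) * KZ (x/u) ∂μ).toReal
  have key : (∫ ω in {ω | |s ω * Z ω| ≤ x}, (s ω * Z ω)^2 ∂ℙ)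
      = (∫⁻ u, ENNReal.ofReal (u^2) * KZ (x/u) ∂μ).toReal := by
    rw [trunc_eq_lintegral (fun ω => s ω * Z ω) (hs.mul hZ) x]
    congr 1
    have s2 : (∫⁻ ω in {ω | |s ω * Z ω| ≤ x}, ENNReal.ofReal ((s ω * Z ω)^2) ∂ℙ)
        = ∫⁻ ω, F (s ω, Z ω) ∂ℙ := by
      rw [← lintegral_indicator (show MeasurableSet {ω | |s ω * Z ω| ≤ x} from measurableSet_le (hs.mul hZ).abs measurable_const)]
      refine lintegral_congr fun ω => ?_
      by_cases h : |s ω * Z ω| ≤ x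
      · have h1 := Set.indicator_of_mem (show ω ∈ {ω | |s ω * Z ω| ≤ x} from h)
          (fun ω => ENNReal.ofReal ((s ω * Z ω)^2))
        have h2 := Set.indicator_of_mem (show (s ω, Z ω) ∈ {p : ℝ × ℝ | |p.1 * p.2| ≤ x} from h)
          (fun p : ℝ × ℝ => ENNReal.ofReal ((p.1 * p.2)^2))
        rw [h1]
        exact h2.symm
      · have h1 := Set.indicator_of_notMem (show ω ∉ {ω | |s ω * Z ω| ≤ x} from h)
          (fun ω => ENNReal.ofReal ((s ω * Z ω)^2))
        have h2 := Set.indicator_of_notMem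
          (show (s ω, Z ω) ∉ {p : ℝ × ℝ | |p.1 * p.2| ≤ x} from h)
          (fun p : ℝ × ℝ => ENNReal.ofReal ((p.1 * p.2)^2))
        rw [h1]
        exact h2.symm
    rw [s2, ← lintegral_map hFmeas (hs.prodMk hZ), hpair, lintegral_prod F hFmeas.aemeasurable]
    -- inner integral computation, a.e. u ≥ 0
    have hae : ∀ᵐ u ∂μ, 0 ≤ u := by
      rw [hμdef]
      exact (ae_map_iff hs.aemeasurable (measurableSet_le measurable_const measurable_id)).2
        (ae_of_all _ hnonneg)
    refine lintegral_congr_ae (hae.mono fun u hu => ?_)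
    rcases eq_or_lt_of_le hu with h0 | hupos
    · -- u = 0
      show ∫⁻ v, F (u, v) ∂ν = ENNReal.ofReal (u^2) * KZ (x/u)
      have hF0 : ∀ v : ℝ, F (u, v) = 0 := by
        intro v
        by_cases h : |u * v| ≤ x
        · have h2 := Set.indicator_of_mem
            (show (u, v) ∈ {p : ℝ × ℝ | |p.1 * p.2| ≤ x} from h)
            (fun p : ℝ × ℝ => ENNReal.ofReal ((p.1 * p.2)^2))
          rw [show F (u, v) = _ from h2, ← h0]
          simp
        · exact Set.indicator_of_notMem
            (show (u, v) ∉ {p : ℝ × ℝ | |p.1 * p.2| ≤ x} from h)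
            (fun p : ℝ × ℝ => ENNReal.ofReal ((p.1 * p.2)^2))
      have hL : ∫⁻ v, F (u, v) ∂ν = 0 := by
        simp only [hF0]
        exact lintegral_zero
      rw [hL, ← h0]
      simp
    · -- u > 0
      show ∫⁻ v, F (u, v) ∂ν = ENNReal.ofReal (u^2) * KZ (x/u)
      have hset : ∀ v : ℝ, (|u * v| ≤ x) ↔ (|v| ≤ x/u) := by
        intro v
        rw [abs_mul, abs_of_pos hupos, le_div_iff₀ hupos, mul_comm]
      have : (fun v => F (u, v))
          = fun v => Set.indicator {v : ℝ | |v| ≤ x/u}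
            (fun v => ENNReal.ofReal (u^2) * ENNReal.ofReal (v^2)) v := by
        funext v
        by_cases h : |v| ≤ x/u
        · have h2 := Set.indicator_of_mem
            (show (u, v) ∈ {p : ℝ × ℝ | |p.1 * p.2| ≤ x} from (hset v).2 h)
            (fun p : ℝ × ℝ => ENNReal.ofReal ((p.1 * p.2)^2))
          have h3 := Set.indicator_of_mem (show v ∈ {v : ℝ | |v| ≤ x/u} from h)
            (fun v : ℝ => ENNReal.ofReal (u^2) * ENNReal.ofReal (v^2))
          rw [show F (u, v) = _ from h2, h3, mul_pow, ENNReal.ofReal_mul (sq_nonneg u)]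
        · have h2 := Set.indicator_of_notMem
            (show (u, v) ∉ {p : ℝ × ℝ | |p.1 * p.2| ≤ x} from fun hmem => h ((hset v).1 hmem))
            (fun p : ℝ × ℝ => ENNReal.ofReal ((p.1 * p.2)^2))
          have h3 := Set.indicator_of_notMem (show v ∉ {v : ℝ | |v| ≤ x/u} from h)
            (fun v : ℝ => ENNReal.ofReal (u^2) * ENNReal.ofReal (v^2))
          rw [show F (u, v) = _ from h2, h3]
      have hms : MeasurableSet {v : ℝ | |v| ≤ x/u} :=
        measurableSet_le (continuous_abs.measurable) measurable_const
      rw [this, lintegral_indicator hms,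
        lintegral_const_mul _ (Measurable.ennreal_ofReal (by fun_prop : Measurable fun v : ℝ => v^2))]
  -- step 5: convert to Bochner integral over μ
  rw [key, integral_eq_lintegral_of_nonneg_ae
    (ae_of_all _ fun u => mul_nonneg (sq_nonneg u) (trunc_nonneg Z hZ (x/u)))
    (((measurable_id.pow_const 2).mul
      (hkzmeas.comp (measurable_const.div measurable_id))).aestronglyMeasurable)]
  congr 1
  refine lintegral_congr fun u => ?_
  rw [ENNReal.ofReal_mul (sq_nonneg u), hKZtoReal (x/u)]


lemma breiman (s Z : Ω → ℝ) (hs : Measurable s) (hZ : Measurable Z)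
    (hnonneg : ∀ ω, 0 ≤ s ω) (hindep : IndepFun s Z ℙ)
    (hs2 : Integrable (fun ω => (s ω)^2) ℙ)
    (hsv : ∀ c : ℝ, 0 < c → Tendsto (fun x => (∫ ω in {ω | |Z ω| ≤ c*x}, (Z ω)^2 ∂ℙ)
      / (∫ ω in {ω | |Z ω| ≤ x}, (Z ω)^2 ∂ℙ)) atTop (𝓝 1))
    (hktop : Tendsto (fun y => ∫ ω in {ω | |Z ω| ≤ y}, (Z ω)^2 ∂ℙ) atTop atTop) :
    Tendsto (fun x => (∫ ω in {ω | |s ω * Z ω| ≤ x}, (s ω * Z ω)^2 ∂ℙ)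
      / (∫ ω in {ω | |Z ω| ≤ x}, (Z ω)^2 ∂ℙ)) atTop (𝓝 (∫ ω, (s ω)^2 ∂ℙ)) := by
  set kz : ℝ → ℝ := fun y => ∫ ω in {ω | |Z ω| ≤ y}, (Z ω)^2 ∂ℙ with hkzdef
  have hkzmeas : Measurable kz := (trunc_mono Z hZ).measurable
  have hkznn : ∀ y, 0 ≤ kz y := trunc_nonneg Z hZ
  set μ := (ℙ : Measure Ω).map s with hμdef
  have hμprob : IsProbabilityMeasure μ := Measure.isProbabilityMeasure_map hs.aemeasurable
  have hm : ∫ u, u^2 ∂μ = ∫ ω, (s ω)^2 ∂ℙ :=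
    integral_map hs.aemeasurable (by fun_prop)
  have hint2 : Integrable (fun u : ℝ => u^2) μ :=
    (integrable_map_measure (by fun_prop) hs.aemeasurable).2 hs2
  obtain ⟨X₁, hX₁pos, hKpos, hPot⟩ := potter_bound (trunc_mono Z hZ)
    (hktop.eventually_gt_atTop 0) (hsv 2 two_pos)
  have hae : ∀ᵐ u ∂μ, 0 ≤ u := by
    rw [hμdef]
    exact (ae_map_iff hs.aemeasurable (measurableSet_le measurable_const measurable_id)).2
      (ae_of_all _ hnonneg)
  have hdct : Tendsto (fun x => ∫ u, (u^2 * kz (x/u)) / kz x ∂μ) atTop (𝓝 (∫ u, u^2 ∂μ)) := by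
    refine tendsto_integral_filter_of_dominated_convergence (fun u => 2 + u^2) ?_ ?_ ?_ ?_
    · refine Eventually.of_forall fun x => ?_
      exact (((measurable_id.pow_const 2).mul
        (hkzmeas.comp (measurable_const.div measurable_id))).div_const (kz x)).aestronglyMeasurable
    · have hx1 : ∀ᶠ x : ℝ in atTop, max X₁ 1 ≤ x := eventually_ge_atTop _
      refine hx1.mono fun x hx => ?_
      have hxX₁ : X₁ ≤ x := le_trans (le_max_left _ _) hx
      have hx1' : (1:ℝ) ≤ x := le_trans (le_max_right _ _) hx
      have hxpos : (0:ℝ) < x := lt_of_lt_of_le one_pos hx1'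
      have hkzx : 0 < kz x := hKpos x hxX₁
      refine hae.mono fun u hu => ?_
      have hFnn : 0 ≤ (u^2 * kz (x/u)) / kz x :=
        div_nonneg (mul_nonneg (sq_nonneg u) (hkznn _)) hkzx.le
      rw [Real.norm_eq_abs, abs_of_nonneg hFnn]
      rcases eq_or_lt_of_le hu with h0 | hupos
      · rw [← h0]
        simp only [ne_eq, OfNat.ofNat_ne_zero, not_false_eq_true, zero_pow, zero_mul, zero_div]
        nlinarith [sq_nonneg (0:ℝ)]
      · by_cases hu1 : u ≤ 1
        · have hxu : x ≤ x/u := by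
            rw [le_div_iff₀ hupos]
            nlinarith
          have hb := hPot x (x/u) hxX₁ hxu
          have hdiv : (x/u)/x = 1/u := by
            field_simp
          rw [hdiv] at hb
          have hnum : u^2 * kz (x/u) ≤ u^2 * (2 * (1/u) * kz x) :=
            mul_le_mul_of_nonneg_left hb (sq_nonneg u)
          have heq : (u^2 * (2 * (1/u) * kz x))/kz x = 2*u := by
            field_simp
          calc (u^2 * kz (x/u)) / kz x ≤ (u^2 * (2 * (1/u) * kz x))/kz x :=
                div_le_div_of_nonneg_right hnum hkzx.le -- check name
          _ = 2*u := heq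
          _ ≤ 2 + u^2 := by nlinarith
        · push_neg at hu1
          have hxu : x/u ≤ x := div_le_self hxpos.le hu1.le
          have hb : kz (x/u) ≤ kz x := trunc_mono Z hZ hxu
          calc (u^2 * kz (x/u)) / kz x ≤ (u^2 * kz x)/kz x := by
                apply div_le_div_of_nonneg_right (mul_le_mul_of_nonneg_left hb (sq_nonneg u)) hkzx.le
          _ = u^2 := by field_simp
          _ ≤ 2 + u^2 := by nlinarith
    · exact (integrable_const 2).add hint2
    · refine hae.mono fun u hu => ?_
      rcases eq_or_lt_of_le hu with h0 | hupos
      · rw [← h0]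
        have : ∀ x : ℝ, ((0:ℝ)^2 * kz (x/0)) / kz x = 0 := by
          intro x
          simp
        simp only [this]
        simpa using tendsto_const_nhds
      · have hid : ∀ x : ℝ, (u^2 * kz (x/u)) / kz x = u^2 * (kz (u⁻¹ * x) / kz x) := by
          intro x
          rw [mul_div_assoc, div_eq_mul_inv x u, mul_comm x u⁻¹]
        simp only [hid]
        have := (hsv u⁻¹ (inv_pos.2 hupos)).const_mul (u^2)
        simpa using this
  have hkey : ∀ x : ℝ, (∫ ω in {ω | |s ω * Z ω| ≤ x}, (s ω * Z ω)^2 ∂ℙ) / kz x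
      = ∫ u, (u^2 * kz (x/u)) / kz x ∂μ := by
    intro x
    rw [fubini_id s Z hs hZ hnonneg hindep x, ← hμdef, integral_div]
  rw [← hm]
  refine hdct.congr fun x => (hkey x).symm

lemma tail_pos (Z : Ω → ℝ) (hZ : Measurable Z)
    (hvar : ¬ Integrable (fun ω => (Z ω)^2) ℙ) {x : ℝ} (hx : 0 < x) :
    0 < (ℙ {ω | x < |Z ω|}).toReal := by
  rcases (ENNReal.toReal_nonneg (a := ℙ {ω | x < |Z ω|})).lt_or_eq with h | h
  · exact h
  exfalso
  have hmz : ℙ {ω | x < |Z ω|} = 0 := by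
    have := h.symm
    rwa [ENNReal.toReal_eq_zero_iff, or_iff_left (measure_ne_top _ _)] at this
  have hae : ∀ᵐ ω ∂(ℙ : Measure Ω), ¬ (x < |Z ω|) := by
    rw [ae_iff]
    simpa using hmz
  refine hvar (Integrable.mono' (integrable_const (x^2))
    (hZ.pow_const 2).aestronglyMeasurable (hae.mono fun ω hω => ?_))
  push_neg at hω
  rw [Real.norm_eq_abs, abs_of_nonneg (sq_nonneg _)]
  nlinarith [sq_abs (Z ω), abs_nonneg (Z ω)]

lemma ell_pos (Z : Ω → ℝ) (hZ : Measurable Z)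
    (hvar : ¬ Integrable (fun ω => (Z ω)^2) ℙ)
    (ℓ : ℝ → ℝ) (htail : ∀ x > 0, (ℙ {ω | |Z ω| > x}).toReal = ℓ x / x ^ 2)
    {x : ℝ} (hx : 0 < x) : 0 < ℓ x := by
  have h := htail x hx
  have h2 : (ℙ {ω | x < |Z ω|}).toReal = ℓ x / x^2 := h
  have h3 := tail_pos Z hZ hvar hx
  rw [h2] at h3
  rcases div_pos_iff.1 h3 with ⟨hp, _⟩ | ⟨_, hneg⟩
  · exact hp
  · nlinarith

-- ratio of ell at x to kz tends to 0
lemma ell_div_kz_tendsto_zero (Z : Ω → ℝ) (hZ : Measurable Z)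
    (hvar : ¬ Integrable (fun ω => (Z ω)^2) ℙ)
    (ℓ : ℝ → ℝ) (hℓ2 : Tendsto (fun x => ℓ (2*x)/ℓ x) atTop (𝓝 1))
    (htail : ∀ x > 0, (ℙ {ω | |Z ω| > x}).toReal = ℓ x / x ^ 2) :
    Tendsto (fun x => ℓ x / (∫ ω in {ω | |Z ω| ≤ x}, (Z ω)^2 ∂ℙ)) atTop (𝓝 0) := by
  set kz : ℝ → ℝ := fun y => ∫ ω in {ω | |Z ω| ≤ y}, (Z ω)^2 ∂ℙ with hkzdef
  -- step estimates
  have hstep : ∀ ε : ℝ, 0 < ε → ε ≤ 1 → ∃ X₀ : ℝ, 0 < X₀ ∧ ∀ x, X₀ ≤ x →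
      (kz x + ℓ x / 2 ≤ kz (2*x) ∧ (1+ε)⁻¹ * ℓ (2*x) ≤ ℓ x) := by
    intro ε hε hε1
    have hev : ∀ᶠ x : ℝ in atTop, ℓ (2*x)/ℓ x < 1 + ε :=
      hℓ2.eventually_lt_const (by linarith)
    obtain ⟨x₀, hx₀⟩ := eventually_atTop.1 (hev.and (eventually_gt_atTop 0))
    refine ⟨max x₀ 1, lt_of_lt_of_le one_pos (le_max_right _ _), fun x hx => ?_⟩
    obtain ⟨hlt, hxpos⟩ := hx₀ x (le_trans (le_max_left _ _) hx)
    have hlx : 0 < ℓ x := ell_pos Z hZ hvar ℓ htail hxpos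
    have hl2x : 0 < ℓ (2*x) := ell_pos Z hZ hvar ℓ htail (by linarith)
    have hmul : ℓ (2*x) < (1+ε) * ℓ x := by
      rwa [div_lt_iff₀ hlx] at hlt
    constructor
    · have hdl := trunc_diff_lower Z hZ hxpos (by linarith : x ≤ 2*x)
      have hpx : (ℙ {ω | x < |Z ω|}).toReal = ℓ x / x^2 := htail x hxpos
      have hp2x : (ℙ {ω | 2*x < |Z ω|}).toReal = ℓ (2*x) / (2*x)^2 := htail (2*x) (by linarith)
      rw [hpx, hp2x] at hdl
      have hx2 : x^2 * (ℓ x / x^2 - ℓ (2*x)/(2*x)^2) = ℓ x - ℓ (2*x)/4 := by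
        field_simp
        ring
      rw [hx2] at hdl
      nlinarith
    · rw [inv_mul_le_iff₀ (by linarith : (0:ℝ) < 1 + ε)]
      nlinarith
  -- main inductive lower bound
  have hmain : ∀ M : ℝ, 0 < M → ∀ᶠ x : ℝ in atTop, M * ℓ x ≤ kz x := by
    intro M hM
    set k : ℕ := max 1 ⌈4*M⌉₊ with hkdef
    have hk1 : 1 ≤ k := le_max_left _ _
    have hkpos : (0:ℝ) < (k:ℝ) := by exact_mod_cast lt_of_lt_of_le one_pos hk1
    have hk4 : 4*M ≤ (k:ℝ) := le_trans (Nat.le_ceil _) (by exact_mod_cast le_max_right 1 ⌈4*M⌉₊)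
    set ε : ℝ := min 1 ((2:ℝ)^((1:ℝ)/k) - 1) with hεdef
    have h2k : (1:ℝ) < (2:ℝ)^((1:ℝ)/k) := by
      have : ((2:ℝ))^((0:ℝ)) < (2:ℝ)^((1:ℝ)/k) := by
        rw [Real.rpow_lt_rpow_left_iff one_lt_two]
        positivity
      simpa using this
    have hε : 0 < ε := lt_min one_pos (by linarith)
    have hε1 : ε ≤ 1 := min_le_left _ _
    have hpow2 : (1+ε)^k ≤ 2 := by
      have h1 : 1 + ε ≤ (2:ℝ)^((1:ℝ)/k) := by
        have := min_le_right 1 ((2:ℝ)^((1:ℝ)/k) - 1)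
        linarith [this]
      calc (1+ε)^k ≤ ((2:ℝ)^((1:ℝ)/k))^k := pow_le_pow_left₀ (by linarith) h1 k
      _ = 2 := by
        rw [← Real.rpow_natCast ((2:ℝ)^((1:ℝ)/k)) k, ← Real.rpow_mul (by norm_num : (0:ℝ) ≤ 2)]
        rw [one_div, inv_mul_cancel₀ (by positivity : (k:ℝ) ≠ 0), Real.rpow_one]
    obtain ⟨X₀, hX₀pos, hst⟩ := hstep ε hε hε1
    set c : ℝ := (1+ε)⁻¹ with hcdef
    have hcpos : 0 < c := by positivity
    have hc1 : c ≤ 1 := by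
      rw [hcdef, inv_le_one_iff₀]
      right; linarith
    have hck : (1:ℝ)/2 ≤ c^k := by
      have hp : (0:ℝ) < (1+ε)^k := pow_pos (by linarith) k
      have h := one_div_le_one_div_of_le hp hpow2
      rw [hcdef, inv_pow, ← one_div]
      exact h
    -- induction
    have hind : ∀ j : ℕ, ∀ z : ℝ, X₀ ≤ z → ((j:ℝ) * c^j / 2) * ℓ ((2:ℝ)^j * z) ≤ kz ((2:ℝ)^j * z) := by
      intro j
      induction j with
      | zero => intro z hz; simpa using trunc_nonneg Z hZ _
      | succ j ih =>
        intro z hz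
        have hzpos : 0 < z := lt_of_lt_of_le hX₀pos hz
        have h2j : (1:ℝ) ≤ (2:ℝ)^j := one_le_pow₀ (by norm_num)
        have hz' : X₀ ≤ (2:ℝ)^j * z := le_trans hz (by nlinarith)
        have hypos : 0 < (2:ℝ)^j * z := by positivity
        obtain ⟨hA, hB⟩ := hst ((2:ℝ)^j * z) hz'
        have heq : (2:ℝ)^(j+1) * z = 2 * ((2:ℝ)^j * z) := by ring
        have hIH := ih z hz
        have hlpos : 0 < ℓ ((2:ℝ)^j * z) := ell_pos Z hZ hvar ℓ htail hypos
        have hl2pos : 0 < ℓ (2 * ((2:ℝ)^j * z)) := ell_pos Z hZ hvar ℓ htail (by linarith)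
        rw [heq]
        have hcj1 : c^j ≤ 1 := pow_le_one₀ hcpos.le hc1
        have t1 : ((j:ℝ)+1) * c^j / 2 * (c * ℓ (2 * ((2:ℝ)^j * z)))
            ≤ ((j:ℝ)+1) * c^j / 2 * ℓ ((2:ℝ)^j * z) :=
          mul_le_mul_of_nonneg_left hB (by positivity)
        have t2 : c^j * ℓ ((2:ℝ)^j * z) ≤ 1 * ℓ ((2:ℝ)^j * z) :=
          mul_le_mul_of_nonneg_right hcj1 hlpos.le
        have hgoal : ((((j:ℕ)+1 : ℕ):ℝ) * c^(j+1) / 2) * ℓ (2 * ((2:ℝ)^j * z))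
            = ((j:ℝ)+1) * c^j / 2 * (c * ℓ (2 * ((2:ℝ)^j * z))) := by
          push_cast
          ring
        rw [hgoal]
        nlinarith [hIH, hA]
    -- conclude
    refine (eventually_ge_atTop (max ((2:ℝ)^k * X₀) 1)).mono fun x hx => ?_
    have hx1 : (2:ℝ)^k * X₀ ≤ x := le_trans (le_max_left _ _) hx
    have hx2 : (1:ℝ) ≤ x := le_trans (le_max_right _ _) hx
    have hz : X₀ ≤ x / 2^k := by
      rw [le_div_iff₀ (by positivity : (0:ℝ) < (2:ℝ)^k)]
      linarith [mul_comm X₀ ((2:ℝ)^k)]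
    have hkx := hind k (x / 2^k) hz
    have hxx : (2:ℝ)^k * (x / 2^k) = x := by field_simp
    rw [hxx] at hkx
    have hcoef : M ≤ (k:ℝ) * c^k / 2 := by
      have t3 : (k:ℝ) * (1/2) ≤ (k:ℝ) * c^k := mul_le_mul_of_nonneg_left hck hkpos.le
      linarith
    have hlx : 0 < ℓ x := ell_pos Z hZ hvar ℓ htail (by linarith)
    nlinarith
  -- final tendsto
  rw [NormedAddCommGroup.tendsto_nhds_zero]
  intro ε hε
  have hM : 0 < 2/ε := by positivity
  filter_upwards [hmain (2/ε) hM, eventually_gt_atTop 0] with x hpx hxpos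
  have hlx := ell_pos Z hZ hvar ℓ htail hxpos
  have hkzx : 0 < kz x := lt_of_lt_of_le (by positivity) hpx
  rw [Real.norm_eq_abs, abs_of_nonneg (div_nonneg hlx.le hkzx.le), div_lt_iff₀ hkzx]
  have h4 : (2/ε) * ℓ x ≤ kz x := hpx
  have h5 : 2 * ℓ x ≤ ε * kz x := by
    calc 2 * ℓ x = ε * ((2/ε) * ℓ x) := by field_simp
    _ ≤ ε * kz x := mul_le_mul_of_nonneg_left h4 hε.le
  linarith

-- slow variation of kz
lemma kz_slowly_varying (Z : Ω → ℝ) (hZ : Measurable Z)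
    (hvar : ¬ Integrable (fun ω => (Z ω)^2) ℙ)
    (ℓ : ℝ → ℝ) (hℓ2 : Tendsto (fun x => ℓ (2*x)/ℓ x) atTop (𝓝 1))
    (htail : ∀ x > 0, (ℙ {ω | |Z ω| > x}).toReal = ℓ x / x ^ 2) :
    ∀ c : ℝ, 0 < c → Tendsto (fun x => (∫ ω in {ω | |Z ω| ≤ c*x}, (Z ω)^2 ∂ℙ)
      / (∫ ω in {ω | |Z ω| ≤ x}, (Z ω)^2 ∂ℙ)) atTop (𝓝 1) := by
  set kz : ℝ → ℝ := fun y => ∫ ω in {ω | |Z ω| ≤ y}, (Z ω)^2 ∂ℙ with hkzdef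
  have hktop : Tendsto kz atTop atTop := trunc_tendsto_atTop Z hZ hvar
  have hKl := ell_div_kz_tendsto_zero Z hZ hvar ℓ hℓ2 htail
  have hge : ∀ c : ℝ, 1 ≤ c → Tendsto (fun x => kz (c*x) / kz x) atTop (𝓝 1) := by
    intro c hc
    have hup : ∀ᶠ x : ℝ in atTop, kz (c*x)/kz x ≤ 1 + c^2 * (ℓ x / kz x) := by
      filter_upwards [eventually_gt_atTop 0, hktop.eventually_gt_atTop 0] with x hxpos hkzx
      have hcx : x ≤ c*x := by nlinarith
      have hdu := trunc_diff_upper Z hZ (by nlinarith : (0:ℝ) ≤ c*x) hcx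
      have hpx : (ℙ {ω | x < |Z ω|}).toReal = ℓ x / x^2 := htail x hxpos
      rw [hpx] at hdu
      have h2 : (c*x)^2 * (ℓ x / x^2) = c^2 * ℓ x := by
        field_simp
      rw [h2] at hdu
      rw [div_le_iff₀ hkzx]
      have h3 : c^2 * (ℓ x/kz x) * kz x = c^2 * ℓ x := by field_simp
      rw [add_mul, one_mul, h3]
      linarith
    have hlo : ∀ᶠ x : ℝ in atTop, 1 ≤ kz (c*x)/kz x := by
      filter_upwards [eventually_gt_atTop 0, hktop.eventually_gt_atTop 0] with x hxpos hkzx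
      rw [le_div_iff₀ hkzx, one_mul]
      exact trunc_mono Z hZ (by nlinarith : x ≤ c*x)
    have hlim : Tendsto (fun x => 1 + c^2 * (ℓ x / kz x)) atTop (𝓝 1) := by
      have := (hKl.const_mul (c^2)).const_add 1
      simpa using this
    exact tendsto_of_tendsto_of_tendsto_of_le_of_le' tendsto_const_nhds hlim hlo hup
  intro c hc
  rcases le_or_gt 1 c with h1 | h1
  · exact hge c h1
  · have hinv := hge c⁻¹ (one_le_inv_iff₀.2 ⟨hc, h1.le⟩)
    have hcomp : Tendsto (fun x => kz (c⁻¹ * (c * x)) / kz (c * x)) atTop (𝓝 1) :=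
      hinv.comp (Tendsto.const_mul_atTop hc tendsto_id)
    have hsimp : (fun x => kz (c⁻¹ * (c * x)) / kz (c * x))
        = fun x => kz x / kz (c * x) := by
      funext x
      rw [inv_mul_cancel_left₀ hc.ne']
    rw [hsimp] at hcomp
    have := hcomp.inv₀ one_ne_zero
    simp only [inv_div, inv_one] at this
    exact this


end aux2

theorem stmt_8 {Ω : Type*} [MeasureSpace Ω] [IsProbabilityMeasure (ℙ : Measure Ω)]
    (s Z : Ω → ℝ) (hs : Measurable s) (hZ : Measurable Z)
    (hnonneg : ∀ ω, 0 ≤ s ω)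
    (hindep : IndepFun s Z ℙ)
    (hmean : ∫ ω, Z ω ∂ℙ = 0)
    (hvar : ¬ Integrable (fun ω => (Z ω) ^ 2) ℙ)
    (ℓ : ℝ → ℝ) (hℓ : SlowlyVarying ℓ)
    (htail : ∀ x > 0, (ℙ {ω | |Z ω| > x}).toReal = ℓ x / x ^ 2)
    (δ : ℝ) (hδ : 0 < δ)
    (hmom : Integrable (fun ω => s ω ^ ((2 : ℝ) + δ)) ℙ)
    -- normalization for Z : a_n^Z → ∞ and n K_Z(a_n^Z)/(a_n^Z)² → 1
    (aZ : ℕ → ℝ) (haZ : Tendsto aZ atTop atTop)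
    (hZnorm : Tendsto
      (fun n : ℕ => (n : ℝ) * (∫ ω in {ω | |Z ω| ≤ aZ n}, (Z ω) ^ 2) / (aZ n) ^ 2)
      atTop (𝓝 1))
    -- normalization for X = σZ
    (a : ℕ → ℝ) (ha : Tendsto a atTop atTop)
    (hnorm : Tendsto
      (fun n : ℕ => (n : ℝ) * (∫ ω in {ω | |s ω * Z ω| ≤ a n}, (s ω * Z ω) ^ 2) / (a n) ^ 2)
      atTop (𝓝 1)) :
    Tendsto (fun n => a n / aZ n) atTop (𝓝 (Real.sqrt (∫ ω, (s ω) ^ 2 ∂ℙ))) := by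
  -- abbreviations
  set kz : ℝ → ℝ := fun y => ∫ ω in {ω | |Z ω| ≤ y}, (Z ω)^2 ∂ℙ with hkzdef
  set kx : ℝ → ℝ := fun y => ∫ ω in {ω | |s ω * Z ω| ≤ y}, (s ω * Z ω)^2 ∂ℙ with hkxdef
  set m : ℝ := ∫ ω, (s ω)^2 ∂ℙ with hmdef
  have hW : Measurable (fun ω => s ω * Z ω) := hs.mul hZ
  have hZnorm' : Tendsto (fun n : ℕ => (n : ℝ) * kz (aZ n) / (aZ n)^2) atTop (𝓝 1) := hZnorm
  have hnorm' : Tendsto (fun n : ℕ => (n : ℝ) * kx (a n) / (a n)^2) atTop (𝓝 1) := hnorm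
  -- basic facts
  have hktop : Tendsto kz atTop atTop := trunc_tendsto_atTop Z hZ hvar
  have hsvZ : ∀ c : ℝ, 0 < c → Tendsto (fun x => kz (c*x) / kz x) atTop (𝓝 1) :=
    kz_slowly_varying Z hZ hvar ℓ (hℓ 2 two_pos) htail
  have hs2 : Integrable (fun ω => (s ω)^2) ℙ := by
    refine Integrable.mono' ((integrable_const 1).add hmom)
      (hs.pow_const 2).aestronglyMeasurable (ae_of_all _ fun ω => ?_)
    rw [Real.norm_eq_abs, abs_of_nonneg (sq_nonneg _)]
    simp only [Pi.add_apply]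
    rcases le_or_gt (s ω) 1 with h1 | h1
    · have h0 := hnonneg ω
      have : s ω^2 ≤ 1 := by nlinarith
      have hr : (0:ℝ) ≤ s ω ^ ((2:ℝ) + δ) := Real.rpow_nonneg h0 _
      linarith
    · have h2 : s ω ^ (2:ℝ) ≤ s ω ^ ((2:ℝ) + δ) :=
        Real.rpow_le_rpow_of_exponent_le h1.le (by linarith)
      have h3 : s ω ^ (2:ℝ) = s ω^2 := by
        rw [show ((2:ℝ)) = ((2:ℕ):ℝ) by norm_num, Real.rpow_natCast]
      rw [← h3]
      have h4 : s ω ^ ((2:ℝ) + δ) = s ω ^ (2 + δ) := rfl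
      linarith
  have hBr : Tendsto (fun x => kx x / kz x) atTop (𝓝 m) :=
    breiman s Z hs hZ hnonneg hindep hs2 hsvZ hktop
  -- positivity of m
  have hm_nonneg : 0 ≤ m := integral_nonneg fun ω => sq_nonneg _
  have hm_pos : 0 < m := by
    rcases hm_nonneg.lt_or_eq with h | h
    · exact h
    exfalso
    have hm0 : m = 0 := h.symm
    have hs0 : (fun ω => (s ω)^2) =ᵐ[ℙ] 0 :=
      (integral_eq_zero_iff_of_nonneg (fun ω => sq_nonneg _) hs2).1 hm0
    have hsz : ∀ᵐ ω ∂(ℙ : Measure Ω), s ω * Z ω = 0 := by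
      refine hs0.mono fun ω hω => ?_
      have : s ω = 0 := by
        have h2 : (s ω)^2 = 0 := hω
        exact pow_eq_zero_iff (by norm_num) |>.1 h2
      rw [this, zero_mul]
    have hkx0 : ∀ y : ℝ, kx y = 0 := by
      intro y
      rw [hkxdef]
      have : ∀ᵐ ω ∂((ℙ : Measure Ω).restrict {ω | |s ω * Z ω| ≤ y}),
          (s ω * Z ω)^2 = (0 : ℝ) := by
        refine ae_restrict_of_ae (hsz.mono fun ω hω => ?_)
        rw [hω]
        norm_num
      calc (∫ ω in {ω | |s ω * Z ω| ≤ y}, (s ω * Z ω)^2 ∂ℙ)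
          = ∫ _ω in {ω | |s ω * Z ω| ≤ y}, (0:ℝ) ∂ℙ := integral_congr_ae this
      _ = 0 := integral_zero _ _
    have hzero : (fun n : ℕ => (n : ℝ) * kx (a n) / (a n)^2) = fun _ => (0:ℝ) := by
      funext n
      rw [hkx0]
      ring
    rw [hzero] at hnorm'
    have := tendsto_nhds_unique hnorm' tendsto_const_nhds
    norm_num at this
  have hsqm : 0 < Real.sqrt m := Real.sqrt_pos.2 hm_pos
  -- the comparison sequence b
  set b : ℕ → ℝ := fun n => Real.sqrt m * aZ n with hbdef
  have hbtop : Tendsto b atTop atTop := Tendsto.const_mul_atTop hsqm haZ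
  have hb2 : ∀ n, (b n)^2 = m * (aZ n)^2 := by
    intro n
    rw [hbdef]
    simp only
    rw [mul_pow, Real.sq_sqrt hm_pos.le]
  have hkzbQ : Tendsto (fun n => kz (b n) / kz (aZ n)) atTop (𝓝 1) :=
    (hsvZ (Real.sqrt m) hsqm).comp haZ
  have hBrb : Tendsto (fun n => kx (b n) / kz (b n)) atTop (𝓝 m) := hBr.comp hbtop
  have hkzaZpos : ∀ᶠ n in atTop, 0 < kz (aZ n) := (hktop.comp haZ).eventually_gt_atTop 0
  have hkzbpos : ∀ᶠ n in atTop, 0 < kz (b n) := (hktop.comp hbtop).eventually_gt_atTop 0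
  have hxoz : Tendsto (fun n => kx (b n) / kz (aZ n)) atTop (𝓝 m) := by
    have hmul := hBrb.mul hkzbQ
    rw [mul_one] at hmul
    refine hmul.congr' ?_
    filter_upwards [hkzbpos] with n hn
    field_simp
  -- b is also a normalizing sequence for kx
  have hBnorm : Tendsto (fun n : ℕ => (n : ℝ) * kx (b n) / (b n)^2) atTop (𝓝 1) := by
    have hmul := hZnorm'.mul (hxoz.mul_const m⁻¹)
    have hlim1 : (1:ℝ) * (m * m⁻¹) = 1 := by
      field_simp
    rw [hlim1] at hmul
    refine hmul.congr' ?_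
    filter_upwards [hkzaZpos, haZ.eventually_gt_atTop 0] with n hn hn2
    rw [hb2 n]
    field_simp
  -- positivity of kx eventually
  have hkxpos_ev : ∀ᶠ x in atTop, 0 < kx x := by
    filter_upwards [hBr.eventually_const_lt (by linarith : m/2 < m), hktop.eventually_gt_atTop 0]
      with x h1 h2
    by_contra hcon
    push_neg at hcon
    have : kx x / kz x ≤ 0 := div_nonpos_iff.2 (Or.inr ⟨hcon, h2.le⟩)
    linarith
  -- slow variation of kx
  have hsvX : ∀ c : ℝ, 0 < c → Tendsto (fun x => kx (c*x) / kx x) atTop (𝓝 1) := by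
    intro c hc
    have hcomp : Tendsto (fun x => kx (c*x) / kz (c*x)) atTop (𝓝 m) :=
      hBr.comp (Tendsto.const_mul_atTop hc tendsto_id)
    have hinv : Tendsto (fun x => kz x / kx x) atTop (𝓝 m⁻¹) :=
      (hBr.inv₀ hm_pos.ne').congr fun x => inv_div _ _
    have hmul := (hcomp.mul (hsvZ c hc)).mul hinv
    have hlim1 : m * 1 * m⁻¹ = 1 := by field_simp
    rw [hlim1] at hmul
    refine hmul.congr' ?_
    filter_upwards [hkxpos_ev, hktop.eventually_gt_atTop 0,
      (hktop.comp (Tendsto.const_mul_atTop hc tendsto_id)).eventually_gt_atTop 0]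
      with x h1 h2 h3
    have h3' : 0 < kz (c*x) := h3
    field_simp
  -- Potter bound for kx
  obtain ⟨X₁, hX₁pos, hXpos, hPotX⟩ := potter_bound (trunc_mono (fun ω => s ω * Z ω) hW)
    hkxpos_ev (hsvX 2 two_pos)
  -- the ratio ρ
  set ρ : ℕ → ℝ := fun n => (kx (a n) * (b n)^2) / (kx (b n) * (a n)^2) with hρdef
  have hρ : Tendsto ρ atTop (𝓝 1) := by
    have hdiv := hnorm'.div hBnorm one_ne_zero
    rw [div_one] at hdiv
    refine hdiv.congr' ?_
    filter_upwards [eventually_ge_atTop 1, ha.eventually_gt_atTop 0, hbtop.eventually_gt_atTop 0,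
      (hbtop.eventually hkxpos_ev)] with n hn1 hn2 hn3 hn4
    have hnpos : (0:ℝ) < (n:ℝ) := by exact_mod_cast hn1
    rw [hρdef]
    simp only [Pi.div_apply]
    field_simp
  -- eventual bounds between a and b
  have hEv : ∀ᶠ n in atTop, X₁ ≤ a n ∧ X₁ ≤ b n :=
    (ha.eventually_ge_atTop X₁).and (hbtop.eventually_ge_atTop X₁)
  have hub : ∀ᶠ n in atTop, a n ≤ 4 * b n := by
    by_contra hcon
    rw [Filter.not_eventually] at hcon
    have hfreq := hcon.and_eventually (hEv.and (hρ.eventually_const_lt (by norm_num : (1:ℝ)/2 < 1)))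
    obtain ⟨n, hn1, ⟨hna, hnb⟩, hn3⟩ := hfreq.exists
    push_neg at hn1
    have hbnpos : 0 < b n := lt_of_lt_of_le hX₁pos hnb
    have hanpos : 0 < a n := lt_of_lt_of_le hX₁pos hna
    have hba : b n ≤ a n := by linarith
    have hP := hPotX (b n) (a n) hnb hba
    have hkxb := hXpos (b n) hnb
    have hP' : kx (a n) * b n ≤ 2 * a n * kx (b n) := by
      have h := mul_le_mul_of_nonneg_right hP hbnpos.le
      calc kx (a n) * b n ≤ 2 * (a n / b n) * kx (b n) * b n := h
      _ = 2 * a n * kx (b n) := by field_simp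
    have hρle : ρ n ≤ 1/2 := by
      rw [hρdef]
      rw [div_le_div_iff₀ (by positivity) (by norm_num)]
      have t1 : 2 * b n * (kx (a n) * b n) ≤ 2 * b n * (2 * a n * kx (b n)) :=
        mul_le_mul_of_nonneg_left hP' (by positivity)
      have t2 : 4 * b n * (a n * kx (b n)) ≤ a n * (a n * kx (b n)) :=
        mul_le_mul_of_nonneg_right hn1.le (by positivity)
      nlinarith
    linarith
  have hlb : ∀ᶠ n in atTop, b n ≤ 4 * a n := by
    by_contra hcon
    rw [Filter.not_eventually] at hcon
    have hfreq := hcon.and_eventually (hEv.and (hρ.eventually_lt_const (by norm_num : (1:ℝ) < 2)))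
    obtain ⟨n, hn1, ⟨hna, hnb⟩, hn3⟩ := hfreq.exists
    push_neg at hn1
    have hbnpos : 0 < b n := lt_of_lt_of_le hX₁pos hnb
    have hanpos : 0 < a n := lt_of_lt_of_le hX₁pos hna
    have hab : a n ≤ b n := by linarith
    have hP := hPotX (a n) (b n) hna hab
    have hkxa := hXpos (a n) hna
    have hkxb := hXpos (b n) hnb
    have hP' : kx (b n) * a n ≤ 2 * b n * kx (a n) := by
      have h := mul_le_mul_of_nonneg_right hP hanpos.le
      calc kx (b n) * a n ≤ 2 * (b n / a n) * kx (a n) * a n := h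
      _ = 2 * b n * kx (a n) := by field_simp
    have hρge : 2 ≤ ρ n := by
      rw [hρdef]
      rw [le_div_iff₀ (by positivity)]
      have t1 : 2 * a n * (kx (b n) * a n) ≤ 2 * a n * (2 * b n * kx (a n)) :=
        mul_le_mul_of_nonneg_left hP' (by positivity)
      have t2 : 4 * a n * (b n * kx (a n)) ≤ b n * (b n * kx (a n)) :=
        mul_le_mul_of_nonneg_right hn1.le (by positivity)
      nlinarith
    linarith
  -- squeeze : kx (a n) / kx (b n) → 1
  have h₃ : Tendsto (fun n => kx (a n) / kx (b n)) atTop (𝓝 1) := by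
    have hup : Tendsto (fun n => kx (4 * b n) / kx (b n)) atTop (𝓝 1) :=
      (hsvX 4 (by norm_num)).comp hbtop
    have hdo : Tendsto (fun n => kx ((1/4 : ℝ) * b n) / kx (b n)) atTop (𝓝 1) :=
      (hsvX (1/4) (by norm_num)).comp hbtop
    refine tendsto_of_tendsto_of_tendsto_of_le_of_le' hdo hup ?_ ?_
    · filter_upwards [hlb, hbtop.eventually hkxpos_ev] with n hn hkb
      refine div_le_div_of_nonneg_right ?_ hkb.le
      refine trunc_mono (fun ω => s ω * Z ω) hW ?_
      linarith
    · filter_upwards [hub, hbtop.eventually hkxpos_ev] with n hn hkb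
      refine div_le_div_of_nonneg_right ?_ hkb.le
      refine trunc_mono (fun ω => s ω * Z ω) hW ?_
      linarith
  -- (a n / b n)² → 1
  have h₄ : Tendsto (fun n => (a n / b n)^2) atTop (𝓝 1) := by
    have hdiv := h₃.div hρ one_ne_zero
    rw [div_one] at hdiv
    refine hdiv.congr' ?_
    filter_upwards [hEv, (hbtop.eventually hkxpos_ev), (ha.eventually hkxpos_ev)]
      with n ⟨hna, hnb⟩ hkb hka
    have hanpos : 0 < a n := lt_of_lt_of_le hX₁pos hna
    have hbnpos : 0 < b n := lt_of_lt_of_le hX₁pos hnb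
    rw [hρdef, div_pow]
    simp only [Pi.div_apply]
    field_simp
  -- a n / b n → 1
  have h₅ : Tendsto (fun n => a n / b n) atTop (𝓝 1) := by
    have hcont : Tendsto (fun n => Real.sqrt ((a n / b n)^2)) atTop (𝓝 1) := by
      have := (Real.continuous_sqrt.tendsto 1).comp h₄
      simpa [Function.comp_def] using this
    refine hcont.congr' ?_
    filter_upwards [ha.eventually_gt_atTop 0, hbtop.eventually_gt_atTop 0] with n h1 h2
    rw [Real.sqrt_sq (by positivity)]
  -- conclude
  have hfin := h₅.mul_const (Real.sqrt m)
  rw [one_mul] at hfin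
  refine hfin.congr' ?_
  filter_upwards [haZ.eventually_gt_atTop 0] with n hn
  rw [hbdef]
  field_simp
end

section
/- Fix θ_0 ≠ 0, a, b with 0 < a^2 + b^2 ≤ 1, r > 0, and let X be the symmetric random variable with density f(x) = c_r |x|^{-3} (1 + a cos(θ_0 log|x|) + b sin(θ_0 log|x|)) 1(|x|>r). Then for y > r, P(X > y) = (c_r/2) y^{-2} (1 + C cos(θ_0 log y) + D sin(θ_0 log y)), where C = (a + θ_0 b/2)/(1 + θ_0^2/4) and D = (b − θ_0 a/2)/(1 + θ_0^2/4). -/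
open MeasureTheory ProbabilityTheory Filter Topology Real
open scoped ProbabilityTheory

set_option maxHeartbeats 2000000 in
theorem stmt_17 {Ω : Type*} [MeasureSpace Ω] [IsProbabilityMeasure (ℙ : Measure Ω)]
    (θ a b r c : ℝ) (hθ : θ ≠ 0) (hab0 : 0 < a ^ 2 + b ^ 2) (hab1 : a ^ 2 + b ^ 2 ≤ 1)
    (hr : 0 < r) (hc : 0 < c)
    (X : Ω → ℝ) (hX : Measurable X)
    -- X has density c |x|^{-3} (1 + a cos(θ log|x|) + b sin(θ log|x|)) 1(|x|>r)
    (hdens : Measure.map X ℙ = MeasureTheory.volume.withDensity (fun x =>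
      ENNReal.ofReal (if r < |x| then
        c * (1 + a * Real.cos (θ * Real.log |x|) + b * Real.sin (θ * Real.log |x|)) / |x| ^ 3
        else 0)))
    (C D : ℝ)
    (hC : C = (a + θ * b / 2) / (1 + θ ^ 2 / 4))
    (hD : D = (b - θ * a / 2) / (1 + θ ^ 2 / 4)) :
    ∀ y > r, (ℙ {ω | X ω > y}).toReal =
      c / 2 * (1 + C * Real.cos (θ * Real.log y) + D * Real.sin (θ * Real.log y)) / y ^ 2 := by
  intro y hy
  have hy0 : 0 < y := hr.trans hy
  -- the density on (y, ∞) and the antiderivative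
  set g' : ℝ → ℝ := fun x =>
    c * (1 + a * Real.cos (θ * Real.log x) + b * Real.sin (θ * Real.log x)) / x ^ 3 with hg'def
  set g : ℝ → ℝ := fun x =>
    -(c/2) * (1 + C * Real.cos (θ * Real.log x) + D * Real.sin (θ * Real.log x)) / x ^ 2
    with hgdef
  -- nonnegativity of the trig factor
  have hbound : ∀ t : ℝ, 0 ≤ 1 + a * Real.cos t + b * Real.sin t := by
    intro t
    nlinarith [sin_sq_add_cos_sq t, sq_nonneg (a * Real.sin t - b * Real.cos t),
      sq_nonneg (1 + a * Real.cos t + b * Real.sin t), sq_nonneg (a * Real.cos t + b * Real.sin t)]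
  have hg'nonneg : ∀ x ∈ Set.Ioi y, 0 ≤ g' x := fun x hx =>
    div_nonneg (mul_nonneg hc.le (hbound _)) (pow_nonneg (hy0.trans hx).le 3)
  -- g is an antiderivative of g' on [y, ∞)
  have hderiv : ∀ x ∈ Set.Ici y, HasDerivAt g (g' x) x := by
    intro x hx
    have hx0 : 0 < x := lt_of_lt_of_le hy0 hx
    have hlog : HasDerivAt (fun x : ℝ => θ * Real.log x) (θ * x⁻¹) x :=
      (Real.hasDerivAt_log hx0.ne').const_mul θ
    have hcos : HasDerivAt (fun x : ℝ => Real.cos (θ * Real.log x))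
        (-Real.sin (θ * Real.log x) * (θ * x⁻¹)) x := (Real.hasDerivAt_cos _).comp x hlog
    have hsin : HasDerivAt (fun x : ℝ => Real.sin (θ * Real.log x))
        (Real.cos (θ * Real.log x) * (θ * x⁻¹)) x := (Real.hasDerivAt_sin _).comp x hlog
    have hN : HasDerivAt
        (fun x : ℝ => 1 + C * Real.cos (θ * Real.log x) + D * Real.sin (θ * Real.log x))
        (C * (-Real.sin (θ * Real.log x) * (θ * x⁻¹)) + D * (Real.cos (θ * Real.log x) * (θ * x⁻¹)))
        x := by
      exact ((hcos.const_mul C).const_add 1).add (hsin.const_mul D)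
    have hden : HasDerivAt (fun x : ℝ => x ^ 2) (2 * x) x := by
      simpa using hasDerivAt_pow 2 x
    have H : HasDerivAt g _ x := (hN.const_mul (-(c/2))).div hden (pow_ne_zero 2 hx0.ne')
    convert H using 1
    have h4 : (1 : ℝ) + θ ^ 2 / 4 ≠ 0 := by positivity
    simp only [hg'def]
    subst hC hD
    field_simp
    ring
  -- g tends to 0 at infinity
  have htend : Tendsto g atTop (𝓝 0) := by
    apply squeeze_zero_norm' (a := fun x : ℝ => (|c|/2 * (1 + |C| + |D|)) * (x ^ 2)⁻¹)
    · filter_upwards [eventually_gt_atTop 0] with x hx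
      simp only [hgdef]
      rw [Real.norm_eq_abs, div_eq_mul_inv, abs_mul, abs_inv, abs_pow, abs_of_pos hx]
      gcongr
      rw [abs_mul, abs_neg, abs_div]
      simp only [abs_two]
      gcongr
      calc |1 + C * Real.cos (θ * Real.log x) + D * Real.sin (θ * Real.log x)|
          ≤ |1 + C * Real.cos (θ * Real.log x)| + |D * Real.sin (θ * Real.log x)| := abs_add_le _ _
        _ ≤ (|(1:ℝ)| + |C * Real.cos (θ * Real.log x)|) + |D * Real.sin (θ * Real.log x)| := by
            gcongr; exact abs_add_le _ _
        _ ≤ 1 + |C| + |D| := by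
            rw [abs_one, abs_mul, abs_mul]
            nlinarith [abs_nonneg C, abs_nonneg D, abs_cos_le_one (θ * Real.log x),
              abs_sin_le_one (θ * Real.log x), abs_nonneg (Real.cos (θ * Real.log x)),
              abs_nonneg (Real.sin (θ * Real.log x))]
    · have h1 : Tendsto (fun x : ℝ => (x ^ 2)⁻¹) atTop (𝓝 0) :=
        (tendsto_pow_atTop (n := 2) (by norm_num)).inv_tendsto_atTop
      simpa using h1.const_mul (|c|/2 * (1 + |C| + |D|))
  -- the improper integral
  have hint : ∫ x in Set.Ioi y, g' x = 0 - g y :=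
    integral_Ioi_of_hasDerivAt_of_nonneg' hderiv hg'nonneg htend
  have hIntOn : IntegrableOn g' (Set.Ioi y) :=
    integrableOn_Ioi_deriv_of_nonneg' hderiv hg'nonneg htend
  -- rewrite the probability as a lintegral
  have h1 : ℙ {ω | X ω > y} = Measure.map X ℙ (Set.Ioi y) := by
    rw [Measure.map_apply hX measurableSet_Ioi]; rfl
  have h2 : Measure.map X ℙ (Set.Ioi y) = ∫⁻ x in Set.Ioi y, ENNReal.ofReal (g' x) := by
    rw [hdens, withDensity_apply _ measurableSet_Ioi]
    apply setLIntegral_congr_fun measurableSet_Ioi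
    intro x hx
    have hx0 : 0 < x := hy0.trans hx
    have habs : |x| = x := abs_of_pos hx0
    beta_reduce
    rw [habs, if_pos (hy.trans hx : r < x)]
  -- convert toReal of lintegral to Bochner integral
  have h3 : (∫⁻ x in Set.Ioi y, ENNReal.ofReal (g' x)).toReal = ∫ x in Set.Ioi y, g' x := by
    rw [integral_eq_lintegral_of_nonneg_ae
      ((ae_restrict_iff' measurableSet_Ioi).mpr (ae_of_all _ hg'nonneg))
      hIntOn.aestronglyMeasurable]
  rw [h1, h2, h3, hint]
  simp only [hgdef]
  ring
end

section
/- With X as in the previous statement (density c_r|x|^{-3}(1 + a cos(θ_0 log|x|) + b sin(θ_0 log|x|)) on |x|>r), the truncated second moment satisfies K(x) = E[X^2 1(|X| ≤ x)] ∼ 2 c_r log x as x → ∞; in particular K is slowly varying, even though x ↦ x^2 P(X>x) = (c_r/2)(1 + C cos(θ_0 log x) + D sin(θ_0 log x)) does not converge and hence P(X>x) is not regularly varying. -/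
open MeasureTheory ProbabilityTheory Filter Topology Real
open scoped ProbabilityTheory

lemma aux_tendsto_one {f : ℝ → ℝ} {c M : ℝ} (hc : 0 < c)
    (h : ∀ᶠ x in atTop, |f x - 2*c*Real.log x| ≤ M) :
    Tendsto (fun x => f x / (2*c*Real.log x)) atTop (𝓝 1) := by
  have hL : Tendsto (fun x : ℝ => 2*c*Real.log x) atTop atTop :=
    (Real.tendsto_log_atTop).const_mul_atTop (by positivity)
  have h0 : Tendsto (fun x => (f x - 2*c*Real.log x) / (2*c*Real.log x)) atTop (𝓝 0) := by
    apply squeeze_zero_norm' (a := fun x => M / (2*c*Real.log x))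
    · filter_upwards [h, hL.eventually_gt_atTop 0] with x hx hx0
      rw [norm_div, Real.norm_eq_abs, Real.norm_eq_abs, abs_of_pos hx0]
      exact (div_le_div_iff_of_pos_right hx0).2 hx
    · exact Tendsto.div_atTop tendsto_const_nhds hL
  have h1 := h0.const_add 1
  rw [add_zero] at h1
  apply h1.congr'
  filter_upwards [hL.eventually_gt_atTop 0] with x hx0
  rw [one_add_div hx0.ne']; congr 1; ring


lemma aux_slowly {f : ℝ → ℝ} {c M : ℝ} (hc : 0 < c)
    (h : ∀ᶠ x in atTop, |f x - 2*c*Real.log x| ≤ M) : SlowlyVarying f := by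
  intro k hk
  have h2 : Tendsto (fun x => f x / (2*c*Real.log x)) atTop (𝓝 1) := aux_tendsto_one hc h
  have h1 : Tendsto (fun x => f (k*x) / (2*c*Real.log x)) atTop (𝓝 1) := by
    apply aux_tendsto_one hc (f := fun x => f (k*x)) (M := M + 2*c*|Real.log k|)
    have hmap : Tendsto (fun x : ℝ => k * x) atTop atTop :=
      Tendsto.const_mul_atTop hk tendsto_id
    filter_upwards [hmap.eventually h, eventually_gt_atTop 0] with x hx hx0
    have hlog : Real.log (k*x) = Real.log k + Real.log x := Real.log_mul (ne_of_gt hk) (ne_of_gt hx0)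
    calc |f (k*x) - 2*c*Real.log x|
        = |(f (k*x) - 2*c*Real.log (k*x)) + 2*c*Real.log k| := by rw [hlog]; ring_nf
      _ ≤ |f (k*x) - 2*c*Real.log (k*x)| + |2*c*Real.log k| := abs_add_le _ _
      _ ≤ M + 2*c*|Real.log k| := by
          have : |2*c*Real.log k| = 2*c*|Real.log k| := by
            rw [abs_mul, abs_of_pos (by positivity : (0:ℝ) < 2*c)]
          rw [this]; exact add_le_add hx le_rfl
  have := h1.div h2 one_ne_zero
  rw [div_one] at this
  apply this.congr'
  have hL : Tendsto (fun x : ℝ => 2*c*Real.log x) atTop atTop :=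
    (Real.tendsto_log_atTop).const_mul_atTop (by positivity)
  filter_upwards [hL.eventually_gt_atTop 0] with x hx0
  show f (k*x) / (2*c*Real.log x) / (f x / (2*c*Real.log x)) = f (k*x) / f x
  rw [div_div_div_comm, div_self (ne_of_gt hx0), div_one]


lemma aux_no_limit {C D cc : ℝ} (hc : 0 < cc) (hCD : ¬(C = 0 ∧ D = 0)) :
    ¬ ∃ l : ℝ, Tendsto (fun t : ℝ => cc * (1 + C * Real.cos t + D * Real.sin t)) atTop (𝓝 l) := by
  rintro ⟨l, hl⟩
  set z : ℂ := ⟨C, D⟩ with hzdef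
  have hz : z ≠ 0 := by
    intro h
    exact hCD ⟨by simpa using congrArg Complex.re h, by simpa using congrArg Complex.im h⟩
  set R := ‖z‖ with hRdef
  have hR : 0 < R := by simpa [hRdef] using (norm_pos_iff.mpr hz)
  set φ := Complex.arg z with hφdef
  have hCφ : C = R * Real.cos φ := by
    rw [hφdef, Complex.cos_arg hz, ← hRdef]
    field_simp
    rfl
  have hDφ : D = R * Real.sin φ := by
    rw [hφdef, Complex.sin_arg, ← hRdef]
    field_simp
    rfl
  have key : ∀ t, cc * (1 + C * Real.cos t + D * Real.sin t) = cc * (1 + R * Real.cos (t - φ)) := by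
    intro t; rw [Real.cos_sub, hCφ, hDφ]; ring
  have hl' : Tendsto (fun t => cc * (1 + R * Real.cos (t - φ))) atTop (𝓝 l) :=
    hl.congr key
  have hseq : ∀ ψ : ℝ, Tendsto (fun n : ℕ => φ + ψ + n * (2*π)) atTop atTop := by
    intro ψ
    apply tendsto_atTop_add_const_left
    exact Tendsto.atTop_mul_const (by positivity) tendsto_natCast_atTop_atTop
  have hval : ∀ ψ : ℝ, l = cc * (1 + R * Real.cos ψ) := by
    intro ψ
    have h1 : Tendsto (fun n : ℕ => cc * (1 + R * Real.cos ((φ + ψ + n * (2*π)) - φ)))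
        atTop (𝓝 l) := hl'.comp (hseq ψ)
    have h2 : ∀ n : ℕ, cc * (1 + R * Real.cos ((φ + ψ + n * (2*π)) - φ))
        = cc * (1 + R * Real.cos ψ) := by
      intro n
      rw [show (φ + ψ + n * (2*π)) - φ = ψ + n * (2*π) by ring, Real.cos_add_nat_mul_two_pi]
    rw [funext h2] at h1
    exact tendsto_nhds_unique h1 tendsto_const_nhds
  have e1 := hval 0
  have e2 := hval π
  rw [Real.cos_zero] at e1
  rw [Real.cos_pi] at e2
  nlinarith

lemma aux_no_limit_log {θ C D cc : ℝ} (hθ : θ ≠ 0) (hc : 0 < cc) (hCD : ¬(C = 0 ∧ D = 0)) :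
    ¬ ∃ l : ℝ, Tendsto (fun y : ℝ =>
      cc * (1 + C * Real.cos (θ * Real.log y) + D * Real.sin (θ * Real.log y))) atTop (𝓝 l) := by
  rintro ⟨l, hl⟩
  rcases hθ.lt_or_gt with hneg | hpos
  · have hmap : Tendsto (fun t : ℝ => Real.exp (-t/θ)) atTop atTop := by
      apply Real.tendsto_exp_atTop.comp
      have : Tendsto (fun t : ℝ => t * (-1/θ)) atTop atTop :=
        Tendsto.atTop_mul_const (by rw [neg_div]; exact neg_pos.2 (div_neg_of_pos_of_neg one_pos hneg)) tendsto_id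
      exact this.congr (fun t => by rw [neg_div]; ring)
    have h2 := hl.comp hmap
    apply aux_no_limit hc (C := C) (D := -D) (fun h => hCD ⟨h.1, by linarith [h.2]⟩)
    refine ⟨l, h2.congr (fun t => ?_)⟩
    simp only [Function.comp_apply, Real.log_exp]
    rw [show θ * (-t/θ) = -t by rw [mul_div_assoc', mul_comm, mul_div_assoc, div_self hθ, mul_one], Real.cos_neg, Real.sin_neg]
    ring
  · have hmap : Tendsto (fun t : ℝ => Real.exp (t/θ)) atTop atTop := by
      apply Real.tendsto_exp_atTop.comp
      have : Tendsto (fun t : ℝ => t * (1/θ)) atTop atTop :=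
        Tendsto.atTop_mul_const (by positivity) tendsto_id
      exact this.congr (fun t => by ring)
    have h2 := hl.comp hmap
    apply aux_no_limit hc (C := C) (D := D) hCD
    refine ⟨l, h2.congr (fun t => ?_)⟩
    simp only [Function.comp_apply, Real.log_exp]
    rw [mul_div_cancel₀ _ hθ]

set_option maxHeartbeats 1000000 in
theorem stmt_18 {Ω : Type*} [MeasureSpace Ω] [IsProbabilityMeasure (ℙ : Measure Ω)]
    (θ r c C D : ℝ) (hθ : θ ≠ 0) (hr : 0 < r) (hc : 0 < c)
    (hCD : (C, D) ≠ (0, 0))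
    (X : Ω → ℝ) (hX : Measurable X)
    -- X symmetric
    (hsym : Measure.map X ℙ = Measure.map (fun ω => -X ω) ℙ)
    -- the tail formula of the preceding statement
    (htail : ∀ y > r, (ℙ {ω | X ω > y}).toReal =
      c / 2 * (1 + C * Real.cos (θ * Real.log y) + D * Real.sin (θ * Real.log y)) / y ^ 2) :
    -- K(x) ∼ 2c log x
    Tendsto (fun x => (∫ ω in {ω | |X ω| ≤ x}, (X ω) ^ 2) / (2 * c * Real.log x))
      atTop (𝓝 1) ∧
    -- K is slowly varying
    SlowlyVarying (fun x => ∫ ω in {ω | |X ω| ≤ x}, (X ω) ^ 2) ∧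
    -- x² P(X > x) does not converge, hence P(X > x) is not regularly varying
    ¬ ∃ l : ℝ, Tendsto (fun y => y ^ 2 * (ℙ {ω | X ω > y}).toReal) atTop (𝓝 l) := by
  have hCD' : ¬(C = 0 ∧ D = 0) := by
    rintro ⟨h1, h2⟩; exact hCD (by rw [h1, h2])
  have hX2 : Measurable fun ω => X ω ^ 2 := hX.pow_const 2
  set K : ℝ → ℝ := fun x => ∫ ω in {ω | |X ω| ≤ x}, (X ω) ^ 2 with hKdef
  set G : ℝ → ℝ := fun y => (ℙ {ω | y < |X ω|}).toReal with hGdef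
  -- symmetry of the tail
  have hsymm' : ∀ y : ℝ, ℙ {ω | X ω < -y} = ℙ {ω | y < X ω} := by
    intro y
    have h1 : ℙ {ω | X ω < -y} = (Measure.map X ℙ) (Set.Iio (-y)) := by
      rw [Measure.map_apply hX measurableSet_Iio]; rfl
    rw [hsym, Measure.map_apply (f := fun ω => -X ω) hX.neg measurableSet_Iio] at h1
    rw [h1]
    congr 1
    ext ω
    simp only [Set.mem_preimage, Set.mem_Iio, Set.mem_setOf_eq, neg_lt_neg_iff]
  -- formula for the two-sided tail
  have hG : ∀ y, r < y →
      G y = c * (1 + C * Real.cos (θ * Real.log y) + D * Real.sin (θ * Real.log y)) / y ^ 2 := by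
    intro y hy
    have hy0 : 0 < y := lt_trans hr hy
    have hset : {ω | y < |X ω|} = {ω | y < X ω} ∪ {ω | X ω < -y} := by
      ext ω
      simp only [Set.mem_setOf_eq, Set.mem_union, lt_abs]
      constructor
      · rintro (h | h)
        · exact Or.inl h
        · exact Or.inr (by linarith)
      · rintro (h | h)
        · exact Or.inl h
        · exact Or.inr (by linarith)
    have hdisj : Disjoint {ω | y < X ω} {ω | X ω < -y} := by
      rw [Set.disjoint_left]
      intro ω h1 h2
      simp only [Set.mem_setOf_eq] at h1 h2
      linarith
    have hmeas2 : MeasurableSet {ω | X ω < -y} := measurableSet_lt hX measurable_const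
    have : ℙ {ω | y < |X ω|} = ℙ {ω | y < X ω} + ℙ {ω | X ω < -y} := by
      rw [hset, measure_union hdisj hmeas2]
    rw [hGdef]
    simp only
    rw [this, hsymm' y, ENNReal.toReal_add (measure_ne_top _ _) (measure_ne_top _ _)]
    have htl := htail y hy
    have  hP : (ℙ {ω | y < X ω}).toReal
        = c / 2 * (1 + C * Real.cos (θ * Real.log y) + D * Real.sin (θ * Real.log y)) / y ^ 2 := htl
    rw [hP]; ring
  -- the key computation
  have key : ∀ x, r < x → ∃ B : ℝ, 0 ≤ B ∧ B ≤ r^2 ∧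
      K x = B + (c * Real.log (x^2) - c * Real.log (r^2))
          + c*(2*C/θ) * (Real.sin (θ/2*Real.log (x^2)) - Real.sin (θ/2*Real.log (r^2)))
          - c*(2*D/θ) * (Real.cos (θ/2*Real.log (x^2)) - Real.cos (θ/2*Real.log (r^2)))
          - G x * (x^2 - r^2) := by
    intro x hx
    have hx0 : 0 < x := lt_trans hr hx
    have hr2 : (0:ℝ) < r^2 := by positivity
    have hx2 : (0:ℝ) < x^2 := by positivity
    have hr2x2 : r^2 ≤ x^2 := by nlinarith
    set s : Set Ω := {ω | |X ω| ≤ x} with hsdef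
    have hs : MeasurableSet s := measurableSet_le hX.abs measurable_const
    set f : Ω → ℝ := s.indicator (fun ω => X ω ^ 2) with hfdef
    have hfb : ∀ ω, f ω ≤ x^2 := by
      intro ω
      by_cases hω : ω ∈ s
      · rw [hfdef, Set.indicator_of_mem hω]
        have : |X ω| ≤ x := hω
        calc X ω ^ 2 = |X ω|^2 := (sq_abs _).symm
          _ ≤ x^2 := by nlinarith [abs_nonneg (X ω)]
      · rw [hfdef, Set.indicator_of_notMem hω]; positivity
    have hfnn : ∀ ω, 0 ≤ f ω := fun ω => Set.indicator_nonneg (fun ω _ => sq_nonneg _) ω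
    have hfmeas : Measurable f := hX2.indicator hs
    have hf_int : Integrable f ℙ := by
      apply Integrable.mono' (integrable_const (x^2)) hfmeas.aestronglyMeasurable
      exact ae_of_all _ (fun ω => by rw [Real.norm_eq_abs, abs_of_nonneg (hfnn ω)]; exact hfb ω)
    have hK : K x = ∫ t in Set.Ioi (0:ℝ), (ℙ {a | t < f a}).toReal := by
      rw [hKdef]
      simp only
      rw [← integral_indicator hs]
      exact hf_int.integral_eq_integral_meas_lt (ae_of_all _ hfnn)
    set F : ℝ → ℝ := fun t => (ℙ {a | t < f a}).toReal with hFdef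
    have hF_nonneg : ∀ t, 0 ≤ F t := fun t => ENNReal.toReal_nonneg
    have hF_le_one : ∀ t, F t ≤ 1 := by
      intro t
      have h1 : ℙ {a | t < f a} ≤ 1 := prob_le_one
      have h2 := ENNReal.toReal_mono (by simp : (1:ENNReal) ≠ ⊤) h1
      simpa using h2
    have hF_anti : Antitone F := by
      intro t1 t2 h
      exact ENNReal.toReal_mono (measure_ne_top _ _)
        (measure_mono (fun a ha => lt_of_le_of_lt h ha))
    have hFint : ∀ a b : ℝ, IntegrableOn F (Set.Ioc a b) := by
      intro a b
      have h1 : IntegrableOn (fun _ : ℝ => (1:ℝ)) (Set.Ioc a b) :=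
        integrableOn_const measure_Ioc_lt_top.ne
      apply Integrable.mono' h1 hF_anti.measurable.aestronglyMeasurable
      exact ae_of_all _ (fun t => by
        rw [Real.norm_eq_abs, abs_of_nonneg (hF_nonneg t)]; exact hF_le_one t)
    have hF_zero : ∀ t, x^2 ≤ t → F t = 0 := by
      intro t ht
      have : {a | t < f a} = ∅ := by
        ext a; simp only [Set.mem_setOf_eq, Set.mem_empty_iff_false, iff_false, not_lt]
        exact (hfb a).trans ht
      rw [hFdef]; simp only [this, measure_empty, ENNReal.toReal_zero]
    have hF_eq : ∀ t, 0 < t → t ≤ x^2 → F t = G (Real.sqrt t) - G x := by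
      intro t ht htx
      have hset : {a | t < f a} = {a | Real.sqrt t < |X a|} \ {a | x < |X a|} := by
        ext a
        simp only [Set.mem_setOf_eq, Set.mem_diff, not_lt]
        constructor
        · intro h
          have hmem : a ∈ s := by
            by_contra hm
            rw [hfdef, Set.indicator_of_notMem hm] at h
            exact absurd h (not_lt.2 ht.le)
          rw [hfdef, Set.indicator_of_mem hmem] at h
          refine ⟨?_, hmem⟩
          have h2 : Real.sqrt t < Real.sqrt (X a ^ 2) := Real.sqrt_lt_sqrt ht.le h
          rwa [Real.sqrt_sq_eq_abs] at h2
        · rintro ⟨h1, h2⟩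
          have hmem : a ∈ s := h2
          rw [hfdef, Set.indicator_of_mem hmem]
          have h3 : (Real.sqrt t)^2 < |X a|^2 :=
            pow_lt_pow_left₀ h1 (Real.sqrt_nonneg t) (by norm_num)
          rwa [Real.sq_sqrt ht.le, sq_abs] at h3
      have hsub : {a | x < |X a|} ⊆ {a | Real.sqrt t < |X a|} := by
        intro a ha
        simp only [Set.mem_setOf_eq] at *
        have : Real.sqrt t ≤ x := by
          calc Real.sqrt t ≤ Real.sqrt (x^2) := Real.sqrt_le_sqrt htx
            _ = x := Real.sqrt_sq hx0.le
        linarith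
      have hmeasB : MeasurableSet {a | x < |X a|} := measurableSet_lt measurable_const hX.abs
      rw [hFdef]
      simp only [hset]
      rw [measure_diff hsub hmeasB.nullMeasurableSet (measure_ne_top _ _),
        ENNReal.toReal_sub_of_le (measure_mono hsub) (measure_ne_top _ _)]
    -- restrict the integral to (0, x²]
    have hsplit1 : ∫ t in Set.Ioi (0:ℝ), F t = ∫ t in Set.Ioc (0:ℝ) (x^2), F t := by
      rw [← Set.Ioc_union_Ioi_eq_Ioi hx2.le]
      rw [setIntegral_union (Set.Ioc_disjoint_Ioi le_rfl) measurableSet_Ioi (hFint 0 (x^2))]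
      · have hzero : ∫ t in Set.Ioi (x^2), F t = 0 := by
          rw [setIntegral_congr_fun measurableSet_Ioi
            (fun t ht => hF_zero t (le_of_lt ht))]
          simp
        rw [hzero, add_zero]
      · apply (integrableOn_congr_fun (fun t ht => hF_zero t (le_of_lt ht))
          measurableSet_Ioi).2
        exact integrableOn_zero
    -- split at r²
    have hsplit2 : ∫ t in Set.Ioc (0:ℝ) (x^2), F t
        = (∫ t in Set.Ioc (0:ℝ) (r^2), F t) + ∫ t in Set.Ioc (r^2) (x^2), F t := by
      rw [← Set.Ioc_union_Ioc_eq_Ioc hr2.le hr2x2]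
      exact setIntegral_union (Set.Ioc_disjoint_Ioc_of_le le_rfl) measurableSet_Ioc
        (hFint 0 (r^2)) (hFint (r^2) (x^2))
    set B : ℝ := ∫ t in Set.Ioc (0:ℝ) (r^2), F t with hBdef
    have hB0 : 0 ≤ B := setIntegral_nonneg measurableSet_Ioc (fun t _ => hF_nonneg t)
    have hBr : B ≤ r^2 := by
      calc B ≤ ∫ _ in Set.Ioc (0:ℝ) (r^2), (1:ℝ) := by
            apply setIntegral_mono_on (hFint 0 (r^2))
              (integrableOn_const measure_Ioc_lt_top.ne) measurableSet_Ioc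
            exact fun t _ => hF_le_one t
        _ = r^2 := by
            rw [setIntegral_const, smul_eq_mul, mul_one, Measure.real, Real.volume_Ioc,
              ENNReal.toReal_ofReal (by simpa using sq_nonneg r)]
            ring
    -- the main piece via FTC
    set ψ : ℝ → ℝ := fun t =>
      c * (1 + C * Real.cos (θ/2 * Real.log t) + D * Real.sin (θ/2 * Real.log t)) / t - G x
      with hψdef
    have hFψ : ∀ t ∈ Set.Ioc (r^2) (x^2), F t = ψ t := by
      intro t ht
      obtain ⟨ht1, ht2⟩ := ht
      have ht0 : 0 < t := lt_trans hr2 ht1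
      have hsq : r < Real.sqrt t := by
        rw [show r = Real.sqrt (r^2) from (Real.sqrt_sq hr.le).symm]
        exact Real.sqrt_lt_sqrt (by positivity) ht1
      rw [hF_eq t ht0 ht2, hG _ hsq, Real.sq_sqrt ht0.le, Real.log_sqrt ht0.le, hψdef]
      have : θ * (Real.log t / 2) = θ/2 * Real.log t := by ring
      rw [this]
    have hmain : ∫ t in Set.Ioc (r^2) (x^2), F t
        = (c * (Real.log (x^2) + (2*C/θ) * Real.sin (θ/2*Real.log (x^2))
              - (2*D/θ) * Real.cos (θ/2*Real.log (x^2))) - G x * x^2)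
        - (c * (Real.log (r^2) + (2*C/θ) * Real.sin (θ/2*Real.log (r^2))
              - (2*D/θ) * Real.cos (θ/2*Real.log (r^2))) - G x * r^2) := by
      rw [setIntegral_congr_fun measurableSet_Ioc hFψ]
      rw [← intervalIntegral.integral_of_le hr2x2]
      set A : ℝ → ℝ := fun t =>
        c * (Real.log t + (2*C/θ) * Real.sin (θ/2*Real.log t)
          - (2*D/θ) * Real.cos (θ/2*Real.log t)) - G x * t with hAdef
      have huIcc : Set.uIcc (r^2) (x^2) = Set.Icc (r^2) (x^2) := Set.uIcc_of_le hr2x2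
      have hpos : ∀ t ∈ Set.uIcc (r^2) (x^2), 0 < t := by
        intro t ht
        rw [huIcc] at ht
        exact lt_of_lt_of_le hr2 ht.1
      have hderiv : ∀ t ∈ Set.uIcc (r^2) (x^2), HasDerivAt A (ψ t) t := by
        intro t ht
        have ht0 : 0 < t := hpos t ht
        have h1 : HasDerivAt Real.log t⁻¹ t := Real.hasDerivAt_log (ne_of_gt ht0)
        have hin : HasDerivAt (fun u => θ/2 * Real.log u) (θ/2 * t⁻¹) t := h1.const_mul (θ/2)
        have hsin : HasDerivAt (fun u => Real.sin (θ/2 * Real.log u))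
            (Real.cos (θ/2 * Real.log t) * (θ/2 * t⁻¹)) t :=
          (Real.hasDerivAt_sin _).comp t hin
        have hcos : HasDerivAt (fun u => Real.cos (θ/2 * Real.log u))
            (-Real.sin (θ/2 * Real.log t) * (θ/2 * t⁻¹)) t :=
          (Real.hasDerivAt_cos _).comp t hin
        have hcomb := (((h1.add ((hsin.const_mul (2*C/θ)).sub
          (hcos.const_mul (2*D/θ)))).const_mul c).sub ((hasDerivAt_id t).const_mul (G x)))
        refine HasDerivAt.congr_deriv (hcomb.congr_of_eventuallyEq (Filter.EventuallyEq.of_eq ?_)) ?_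
        · funext u
          simp only [hAdef, id_eq, Pi.sub_apply, Pi.add_apply]
          ring
        · rw [hψdef]
          field_simp
          ring
      have hcontψ : ContinuousOn ψ (Set.uIcc (r^2) (x^2)) := by
        rw [hψdef]
        apply ContinuousOn.sub _ continuousOn_const
        apply ContinuousOn.div
        · have hlog : ContinuousOn Real.log (Set.uIcc (r^2) (x^2)) :=
            Real.continuousOn_log.mono (fun t ht => ne_of_gt (hpos t ht))
          apply continuousOn_const.mul
          apply (continuousOn_const.add _).add
          · exact continuousOn_const.mul
              (Real.continuous_sin.comp_continuousOn (continuousOn_const.mul hlog))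
          · exact continuousOn_const.mul
              (Real.continuous_cos.comp_continuousOn (continuousOn_const.mul hlog))
        · exact continuousOn_id
        · exact fun t ht => ne_of_gt (hpos t ht)
      rw [intervalIntegral.integral_eq_sub_of_hasDerivAt hderiv
        (hcontψ.intervalIntegrable)]
    refine ⟨B, hB0, hBr, ?_⟩
    rw [hK, hsplit1, hsplit2, hmain]
    ring
  -- the uniform bound
  set M : ℝ := r^2 + c*|Real.log (r^2)| + |c*(2*C/θ)| * 2 + |c*(2*D/θ)| * 2 + c*(1+|C|+|D|) with hMdef
  have hM : ∀ x, r < x → |K x - 2*c*Real.log x| ≤ M := by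
    intro x hx
    have hx0 : 0 < x := lt_trans hr hx
    obtain ⟨B, hB0, hBr, hKx⟩ := key x hx
    have hlogx : Real.log (x^2) = 2 * Real.log x := by
      rw [Real.log_pow]; norm_num
    -- bound the G-term
    have hGx : G x = c * (1 + C * Real.cos (θ * Real.log x) + D * Real.sin (θ * Real.log x)) / x ^ 2 :=
      hG x hx
    have hGx0 : 0 ≤ G x := ENNReal.toReal_nonneg
    have hx2r2 : 0 ≤ x^2 - r^2 := by nlinarith
    have hAx : 1 + C * Real.cos (θ * Real.log x) + D * Real.sin (θ * Real.log x) ≤ 1 + |C| + |D| := by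
      have h1 : C * Real.cos (θ * Real.log x) ≤ |C| := by
        calc C * Real.cos (θ * Real.log x) ≤ |C * Real.cos (θ * Real.log x)| := le_abs_self _
          _ = |C| * |Real.cos (θ * Real.log x)| := abs_mul _ _
          _ ≤ |C| * 1 := mul_le_mul_of_nonneg_left (Real.abs_cos_le_one _) (abs_nonneg _)
          _ = |C| := mul_one _
      have h2 : D * Real.sin (θ * Real.log x) ≤ |D| := by
        calc D * Real.sin (θ * Real.log x) ≤ |D * Real.sin (θ * Real.log x)| := le_abs_self _
          _ = |D| * |Real.sin (θ * Real.log x)| := abs_mul _ _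
          _ ≤ |D| * 1 := mul_le_mul_of_nonneg_left (Real.abs_sin_le_one _) (abs_nonneg _)
          _ = |D| := mul_one _
      linarith
    have hGterm : 0 ≤ G x * (x^2 - r^2) ∧ G x * (x^2 - r^2) ≤ c*(1+|C|+|D|) := by
      constructor
      · exact mul_nonneg hGx0 hx2r2
      · calc G x * (x^2 - r^2) ≤ G x * x^2 := by nlinarith
          _ = c * (1 + C * Real.cos (θ * Real.log x) + D * Real.sin (θ * Real.log x)) := by
              rw [hGx]; field_simp
          _ ≤ c*(1+|C|+|D|) := by nlinarith
    have hu1 : |B - c * Real.log (r^2)| ≤ r^2 + c*|Real.log (r^2)| := by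
      have := abs_sub B (c * Real.log (r^2))
      have h2 : |B| = B := abs_of_nonneg hB0
      have h3 : |c * Real.log (r^2)| = c * |Real.log (r^2)| := by
        rw [abs_mul, abs_of_pos hc]
      calc |B - c * Real.log (r^2)| ≤ |B| + |c * Real.log (r^2)| := abs_sub _ _
        _ = B + c*|Real.log (r^2)| := by rw [h2, h3]
        _ ≤ r^2 + c*|Real.log (r^2)| := by linarith
    have hΔs : |Real.sin (θ/2*Real.log (x^2)) - Real.sin (θ/2*Real.log (r^2))| ≤ 2 := by
      calc |Real.sin (θ/2*Real.log (x^2)) - Real.sin (θ/2*Real.log (r^2))|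
          ≤ |Real.sin (θ/2*Real.log (x^2))| + |Real.sin (θ/2*Real.log (r^2))| := abs_sub _ _
        _ ≤ 1 + 1 := add_le_add (Real.abs_sin_le_one _) (Real.abs_sin_le_one _)
        _ = 2 := by norm_num
    have hΔc : |Real.cos (θ/2*Real.log (x^2)) - Real.cos (θ/2*Real.log (r^2))| ≤ 2 := by
      calc |Real.cos (θ/2*Real.log (x^2)) - Real.cos (θ/2*Real.log (r^2))|
          ≤ |Real.cos (θ/2*Real.log (x^2))| + |Real.cos (θ/2*Real.log (r^2))| := abs_sub _ _
        _ ≤ 1 + 1 := add_le_add (Real.abs_cos_le_one _) (Real.abs_cos_le_one _)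
        _ = 2 := by norm_num
    have hu2 : |c*(2*C/θ) * (Real.sin (θ/2*Real.log (x^2)) - Real.sin (θ/2*Real.log (r^2)))|
        ≤ |c*(2*C/θ)| * 2 := by
      rw [abs_mul]
      exact mul_le_mul_of_nonneg_left hΔs (abs_nonneg _)
    have hu3 : |c*(2*D/θ) * (Real.cos (θ/2*Real.log (x^2)) - Real.cos (θ/2*Real.log (r^2)))|
        ≤ |c*(2*D/θ)| * 2 := by
      rw [abs_mul]
      exact mul_le_mul_of_nonneg_left hΔc (abs_nonneg _)
    have hrw : K x - 2*c*Real.log x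
        = (B - c * Real.log (r^2))
          + c*(2*C/θ) * (Real.sin (θ/2*Real.log (x^2)) - Real.sin (θ/2*Real.log (r^2)))
          - c*(2*D/θ) * (Real.cos (θ/2*Real.log (x^2)) - Real.cos (θ/2*Real.log (r^2)))
          - G x * (x^2 - r^2) := by
      rw [hKx, hlogx]; ring
    rw [hrw, hMdef]
    have e1 := abs_le.1 hu1
    have e2 := abs_le.1 hu2
    have e3 := abs_le.1 hu3
    rw [abs_le]
    constructor
    · linarith [hGterm.1, hGterm.2, e1.1, e2.1, e3.2]
    · linarith [hGterm.1, hGterm.2, e1.2, e2.2, e3.1]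
  have hev : ∀ᶠ x in atTop, |K x - 2*c*Real.log x| ≤ M :=
    (eventually_gt_atTop r).mono hM
  have p1 : Tendsto (fun x => K x / (2*c*Real.log x)) atTop (𝓝 1) := aux_tendsto_one hc hev
  have p2 : SlowlyVarying K := aux_slowly hc hev
  simp only [hKdef] at p1 p2
  refine ⟨p1, p2, ?_⟩
  rintro ⟨l, hl⟩
  apply aux_no_limit_log hθ (half_pos hc) hCD'
  refine ⟨l, hl.congr' ?_⟩
  filter_upwards [eventually_gt_atTop r] with y hy
  have hy0 : 0 < y := lt_trans hr hy
  rw [htail y hy]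
  field_simp
end
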